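/- arXiv:2109.00774 — 3 statements merged into one kernel-verified Lean document; each statement's English description precedes it below -/
import Mathlib

section
/- Let G and H be finite simple graphs with χ_f(H) ≤ χ_f(G), and let n ≥ 2 be even. Then χ_f(Δ_{H,n}(G)) ≤ χ_f(G) + 1/(∑_{k=0}^{n−1}(χ_f(G)−1)^k). -/
open Finset

/-- A set of vertices of a graph is independent if it contains no edge. -/
def IsIndep {V : Type*} (G : SimpleGraph V) (s : Set V) : Prop :=
  ∀ a ∈ s, ∀ b ∈ s, ¬ G.Adj a b

/-- The fractional chromatic number of a finite graph: the infimum of the weights of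
fractional colourings, where a fractional colouring assigns a value in `[0,1]` to each
independent set so that every vertex receives total value at least `1`. -/
noncomputable def fracChi {V : Type*} [Fintype V] (G : SimpleGraph V) : ℝ := by
  classical
  exact sInf { w : ℝ | ∃ f : Finset V → ℝ,
    (∀ I, 0 ≤ f I) ∧ (∀ I, f I ≤ 1) ∧
    (∀ I : Finset V, ¬ IsIndep G ↑I → f I = 0) ∧
    (∀ v : V, 1 ≤ ∑ I : Finset V, (if v ∈ I then f I else 0)) ∧
    w = ∑ I : Finset V, f I }

/-- Adjacency for the `n`-th cone over `G`.  The vertex `none` is the apex `⋆`, and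
`some (x, i)` is the vertex `(x, i)` in layer `i ∈ {0, …, n-1}`. -/
def coneAdj {V : Type*} (G : SimpleGraph V) (n : ℕ) :
    Option (V × Fin n) → Option (V × Fin n) → Prop
  | some (x, i), some (y, j) =>
      G.Adj x y ∧ ((i : ℕ) + 1 = (j : ℕ) ∨ (j : ℕ) + 1 = (i : ℕ) ∨ ((i : ℕ) = 0 ∧ (j : ℕ) = 0))
  | some (_, i), none => (i : ℕ) = n - 1
  | none, some (_, j) => (j : ℕ) = n - 1
  | none, none => False

/-- The `n`-th cone `Δ_n(G)` over `G`. -/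
def coneGraph {V : Type*} (G : SimpleGraph V) (n : ℕ) : SimpleGraph (Option (V × Fin n)) where
  Adj := coneAdj G n
  symm := ⟨by
    rintro (_ | ⟨x, i⟩) (_ | ⟨y, j⟩) hadj <;> simp only [coneAdj] at hadj ⊢ <;>
      first
        | exact hadj
        | exact ⟨hadj.1.symm, by tauto⟩⟩
  loopless := ⟨by
    rintro (_ | ⟨x, i⟩) hadj <;> simp only [coneAdj] at hadj <;>
      first
        | exact hadj
        | exact G.loopless.irrefl x hadj.1⟩

/-- Vertices of the `(H,h)`-cone over `G`: base vertices `(x,0)` (the left summand `V`),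
inner vertices `((x,i),v)` with `1 ≤ i ≤ h v - 1` (encoded as `⟨v, x, i-1⟩` with
`i - 1 : Fin (h v - 1)`), and apex vertices `(⋆, v)` (the right summand `W`). -/
abbrev HConeVert (V W : Type*) (h : W → ℕ) : Type _ :=
  V ⊕ (Σ w : W, V × Fin (h w - 1)) ⊕ W

/-- Adjacency for the `(H,h)`-cone over `G`. -/
def hConeAdj {V W : Type*} (G : SimpleGraph V) (H : SimpleGraph W) (h : W → ℕ) :
    HConeVert V W h → HConeVert V W h → Prop
  | .inl x, .inl y => G.Adj x y
  | .inl x, .inr (.inl ⟨_, y, i⟩) => G.Adj x y ∧ (i : ℕ) = 0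
  | .inr (.inl ⟨_, y, i⟩), .inl x => G.Adj x y ∧ (i : ℕ) = 0
  | .inl _, .inr (.inr w) => h w = 1
  | .inr (.inr w), .inl _ => h w = 1
  | .inr (.inl ⟨w, x, i⟩), .inr (.inl ⟨w', y, j⟩) =>
      w = w' ∧ G.Adj x y ∧ ((i : ℕ) + 1 = (j : ℕ) ∨ (j : ℕ) + 1 = (i : ℕ))
  | .inr (.inl ⟨w, _, i⟩), .inr (.inr w') => w = w' ∧ (i : ℕ) + 2 = h w
  | .inr (.inr w'), .inr (.inl ⟨w, _, i⟩) => w = w' ∧ (i : ℕ) + 2 = h w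
  | .inr (.inr w), .inr (.inr w') => H.Adj w w'

/-- The `(H,h)`-cone `Δ_{H,h}(G)` over `G`. -/
def hConeGraph {V W : Type*} (G : SimpleGraph V) (H : SimpleGraph W) (h : W → ℕ) :
    SimpleGraph (HConeVert V W h) where
  Adj := hConeAdj G H h
  symm := ⟨by
    rintro (x | ⟨w, x, i⟩ | w) (y | ⟨w', y, j⟩ | w') hadj <;>
      simp only [hConeAdj] at hadj ⊢ <;>
      first
        | exact hadj
        | exact hadj.symm
        | exact ⟨hadj.1.symm, hadj.2.1.symm, hadj.2.2.symm⟩⟩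
  loopless := ⟨by
    rintro (x | ⟨w, x, i⟩ | w) hadj <;> simp only [hConeAdj] at hadj <;>
      first
        | exact G.loopless.irrefl x hadj
        | exact G.loopless.irrefl x hadj.2.1
        | exact H.loopless.irrefl w hadj⟩


set_option linter.unusedSectionVars false
set_option linter.unusedVariables false
section Basic
variable {V : Type*} [Fintype V] [DecidableEq V] (G : SimpleGraph V)

/-- The structure of a fractional colouring. -/
def IsFC (f : Finset V → ℝ) : Prop :=
  (∀ I, 0 ≤ f I) ∧ (∀ I, f I ≤ 1) ∧
  (∀ I : Finset V, ¬ IsIndep G ↑I → f I = 0) ∧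
  (∀ v : V, 1 ≤ ∑ I : Finset V, (if v ∈ I then f I else 0))

lemma fracChi_eq : fracChi G =
    sInf { w : ℝ | ∃ f : Finset V → ℝ, IsFC G f ∧ w = ∑ I : Finset V, f I } := by
  unfold fracChi
  congr 1
  ext w
  constructor
  · rintro ⟨f, h1, h2, h3, h4, h5⟩
    exact ⟨f, ⟨h1, h2, h3, fun v => le_of_le_of_eq (h4 v)
      (Finset.sum_congr rfl fun I _ => by congr 1)⟩, h5⟩
  · rintro ⟨f, ⟨h1, h2, h3, h4⟩, h5⟩
    exact ⟨f, h1, h2, h3, fun v => le_of_le_of_eq (h4 v)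
      (Finset.sum_congr rfl fun I _ => by congr 1), h5⟩

variable {G}

lemma IsFC.zero_le {f} (hf : IsFC G f) : ∀ I, 0 ≤ f I := hf.1
lemma IsFC.le_one {f} (hf : IsFC G f) : ∀ I, f I ≤ 1 := hf.2.1
lemma IsFC.indep {f} (hf : IsFC G f) : ∀ I : Finset V, ¬ IsIndep G ↑I → f I = 0 := hf.2.2.1
lemma IsFC.cover {f} (hf : IsFC G f) :
    ∀ v : V, 1 ≤ ∑ I : Finset V, (if v ∈ I then f I else 0) := hf.2.2.2

variable (G)

lemma exists_isFC : IsFC G (fun I => if ∃ v : V, I = {v} then 1 else 0) := by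
  refine ⟨fun I => by dsimp only; split <;> norm_num,
    fun I => by dsimp only; split <;> norm_num, fun I hI => ?_, fun v => ?_⟩
  · dsimp only; rw [if_neg]
    rintro ⟨v, rfl⟩
    exact hI fun a ha b hb => by
      simp only [Finset.coe_singleton, Set.mem_singleton_iff] at ha hb
      subst ha; subst hb; exact fun h => G.loopless.irrefl _ h
  · have hnn : ∀ I ∈ Finset.univ, (0:ℝ) ≤
        (fun I => if v ∈ I then (if ∃ u : V, I = ({u} : Finset V) then (1:ℝ) else 0) else 0) I := by
      intro I _
      dsimp only
      split
      · split <;> norm_num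
      · exact le_rfl
    have h2 := Finset.single_le_sum hnn (Finset.mem_univ ({v} : Finset V))
    rw [if_pos (Finset.mem_singleton_self v), if_pos ⟨v, rfl⟩] at h2
    exact le_of_le_of_eq h2 (Finset.sum_congr rfl fun I _ => rfl)

lemma fracChi_le {f : Finset V → ℝ} (hf : IsFC G f) : fracChi G ≤ ∑ I : Finset V, f I := by
  rw [fracChi_eq]
  refine csInf_le ⟨0, ?_⟩ ⟨f, hf, rfl⟩
  rintro w ⟨f', hf', rfl⟩
  exact Finset.sum_nonneg fun I _ => hf'.zero_le I

lemma le_fracChi {c : ℝ} (hc : ∀ f : Finset V → ℝ, IsFC G f → c ≤ ∑ I : Finset V, f I) :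
    c ≤ fracChi G := by
  rw [fracChi_eq]
  refine le_csInf ⟨_, ⟨_, exists_isFC G, rfl⟩⟩ ?_
  rintro w ⟨f, hf, rfl⟩
  exact hc f hf

lemma fracChi_nonneg : 0 ≤ fracChi G :=
  le_fracChi G fun f hf => Finset.sum_nonneg fun I _ => hf.zero_le I

lemma one_le_fracChi [Nonempty V] : 1 ≤ fracChi G := by
  refine le_fracChi G fun f hf => ?_
  obtain ⟨v⟩ := ‹Nonempty V›
  calc (1:ℝ) ≤ ∑ I : Finset V, (if v ∈ I then f I else 0) := hf.cover v
    _ ≤ ∑ I : Finset V, f I :=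
      Finset.sum_le_sum fun I _ => by split <;> [exact le_rfl; exact hf.zero_le I]

lemma fracChi_empty [IsEmpty V] : fracChi G = 0 := by
  refine le_antisymm ?_ (fracChi_nonneg G)
  have : IsFC G (fun _ => 0) :=
    ⟨fun I => le_rfl, fun I => zero_le_one, fun I _ => rfl, fun v => isEmptyElim v⟩
  simpa using fracChi_le G this

/-- attainment of the optimum -/
lemma exists_opt : ∃ f : Finset V → ℝ, IsFC G f ∧ ∑ I : Finset V, f I = fracChi G := by
  classical
  set C : Set (Finset V → ℝ) := {f | IsFC G f} with hC
  have hCne : C.Nonempty := ⟨_, exists_isFC G⟩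
  have hsub : C ⊆ Set.univ.pi (fun _ : Finset V => Set.Icc (0:ℝ) 1) := by
    rintro f hf I -
    exact ⟨hf.zero_le I, hf.le_one I⟩
  have hclosed : IsClosed C := by
    have h1 : C = (⋂ I : Finset V, {f : Finset V → ℝ | 0 ≤ f I}) ∩
        ((⋂ I : Finset V, {f : Finset V → ℝ | f I ≤ 1}) ∩
        ((⋂ I ∈ {I : Finset V | ¬ IsIndep G ↑I}, {f : Finset V → ℝ | f I = 0}) ∩
        (⋂ v : V, {f : Finset V → ℝ | 1 ≤ ∑ I : Finset V, (if v ∈ I then f I else 0)}))) := by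
      ext f
      simp only [Set.mem_inter_iff, Set.mem_iInter, Set.mem_setOf_eq, hC, IsFC]
    rw [h1]
    refine IsClosed.inter (isClosed_iInter fun I => ?_) (IsClosed.inter (isClosed_iInter fun I => ?_)
      (IsClosed.inter (isClosed_iInter fun I => isClosed_iInter fun _ => ?_)
        (isClosed_iInter fun v => ?_)))
    · exact isClosed_le continuous_const (continuous_apply I)
    · exact isClosed_le (continuous_apply I) continuous_const
    · exact isClosed_eq (continuous_apply I) continuous_const
    · refine isClosed_le continuous_const ?_
      refine continuous_finset_sum _ fun I _ => ?_
      split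
      · exact continuous_apply I
      · exact continuous_const
  have hcompact : IsCompact C := by
    refine IsCompact.of_isClosed_subset ?_ hclosed hsub
    exact isCompact_univ_pi fun _ => isCompact_Icc
  obtain ⟨f, hfC, hfmin⟩ := hcompact.exists_isMinOn hCne
    ((continuous_finset_sum Finset.univ fun I _ => continuous_apply I).continuousOn)
  refine ⟨f, hfC, le_antisymm ?_ (fracChi_le G hfC)⟩
  refine le_fracChi G fun g hg => hfmin hg

end Basic

section Sums
variable (r : ℝ)

lemma L_Q : ∀ m : ℕ, ∑ t ∈ range (m+1), (if 1 ≤ t ∧ (m-t) % 2 = 1 then (1+r)*r^(t-1) else 0)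
    = (∑ j ∈ range m, r^j) - (if m % 2 = 1 then 1 else 0) := by
  intro m
  induction m using Nat.twoStepInduction with
  | zero => simp
  | one => rw [Finset.sum_range_succ, Finset.sum_range_succ]; norm_num
  | more m ih _ =>
    have hsplit : ∑ t ∈ range (m+2+1), (if 1 ≤ t ∧ (m+2-t) % 2 = 1 then (1+r)*r^(t-1) else 0)
        = (∑ t ∈ range (m+1), (if 1 ≤ t ∧ (m+2-t) % 2 = 1 then (1+r)*r^(t-1) else 0))
          + (if 1 ≤ m+1 ∧ (m+2-(m+1)) % 2 = 1 then (1+r)*r^(m+1-1) else 0)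
          + (if 1 ≤ m+2 ∧ (m+2-(m+2)) % 2 = 1 then (1+r)*r^(m+2-1) else 0) := by
      rw [Finset.sum_range_succ, Finset.sum_range_succ]
    rw [hsplit]
    have e1 : (∑ t ∈ range (m+1), (if 1 ≤ t ∧ (m+2-t) % 2 = 1 then (1+r)*r^(t-1) else 0))
        = ∑ t ∈ range (m+1), (if 1 ≤ t ∧ (m-t) % 2 = 1 then (1+r)*r^(t-1) else 0) := by
      refine Finset.sum_congr rfl fun t ht => ?_
      have ht' : t ≤ m := by simpa [Nat.lt_succ_iff] using ht
      have : (m+2-t) % 2 = (m-t) % 2 := by omega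
      rw [this]
    rw [e1, ih]
    have h2 : (if 1 ≤ m+1 ∧ (m+2-(m+1)) % 2 = 1 then (1+r)*r^(m+1-1) else 0) = (1+r)*r^m := by
      rw [if_pos (by omega)]; norm_num
    have h3 : (if 1 ≤ m+2 ∧ (m+2-(m+2)) % 2 = 1 then (1+r)*r^(m+2-1) else 0) = 0 := by
      rw [if_neg (by omega)]
    rw [h2, h3, Finset.sum_range_succ, Finset.sum_range_succ]
    have : (m+2) % 2 = m % 2 := by omega
    rw [this]
    ring

lemma L_co : ∀ m : ℕ, m % 2 = 0 →
    ∑ t ∈ range (m+1), (if t % 2 = 1 then (1+r)*r^(t-1) else 0) = ∑ j ∈ range m, r^j := by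
  intro m
  induction m using Nat.twoStepInduction with
  | zero => simp
  | one => omega
  | more m ih _ =>
    intro hm
    rw [Finset.sum_range_succ, Finset.sum_range_succ, ih (by omega),
      if_neg (by omega : ¬ (m+2) % 2 = 1), if_pos (by omega : (m+1) % 2 = 1),
      Finset.sum_range_succ, Finset.sum_range_succ]
    simp only [Nat.add_sub_cancel]
    ring

lemma L_ce : ∀ m : ℕ, m % 2 = 0 →
    ∑ t ∈ range (m+1), (if t % 2 = 0 ∧ 2 ≤ t then (1+r)*r^(t-2) else 0) = ∑ j ∈ range m, r^j := by
  intro m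
  induction m using Nat.twoStepInduction with
  | zero => simp
  | one => omega
  | more m ih _ =>
    intro hm
    rw [Finset.sum_range_succ, Finset.sum_range_succ, ih (by omega),
      if_pos (by omega : (m+2) % 2 = 0 ∧ 2 ≤ m + 2), if_neg (by omega : ¬((m+1) % 2 = 0 ∧ 2 ≤ m+1)),
      Finset.sum_range_succ, Finset.sum_range_succ]
    have : m + 2 - 2 = m := by omega
    rw [this]
    ring

lemma L_ID (k n : ℕ) (hk1 : 1 ≤ k) (hk : k < n) :
    (∑ t ∈ range (n+1), (if 1 ≤ t then
        (if k < t then r^(t-1) else if (k-t) % 2 = 1 then (1+r)*r^(t-1) else 0) else 0))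
      + (if k % 2 = 1 then 1 else 0) = ∑ j ∈ range n, r^j := by
  have hsplit : range (n+1) = Ico 0 (k+1) ∪ Ico (k+1) (n+1) := by
    rw [Finset.range_eq_Ico,
      ← Finset.Ico_union_Ico_eq_Ico (Nat.zero_le (k+1)) (by omega : k+1 ≤ n+1)]
  have hdisj : Disjoint (Ico 0 (k+1)) (Ico (k+1) (n+1)) :=
    Finset.Ico_disjoint_Ico_consecutive 0 (k+1) (n+1)
  rw [hsplit, Finset.sum_union hdisj]
  have e1 : ∑ t ∈ Ico 0 (k+1), (if 1 ≤ t then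
      (if k < t then r^(t-1) else if (k-t) % 2 = 1 then (1+r)*r^(t-1) else 0) else 0)
      = ∑ t ∈ range (k+1), (if 1 ≤ t ∧ (k-t) % 2 = 1 then (1+r)*r^(t-1) else 0) := by
    rw [Finset.range_eq_Ico]
    refine Finset.sum_congr rfl fun t ht => ?_
    simp only [Finset.mem_Ico] at ht
    by_cases h1 : 1 ≤ t
    · rw [if_pos h1, if_neg (by omega : ¬ k < t)]
      by_cases h2 : (k-t) % 2 = 1
      · rw [if_pos h2, if_pos ⟨h1, h2⟩]
      · rw [if_neg h2, if_neg (by tauto)]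
    · rw [if_neg h1, if_neg (by tauto)]
  have e2 : ∑ t ∈ Ico (k+1) (n+1), (if 1 ≤ t then
      (if k < t then r^(t-1) else if (k-t) % 2 = 1 then (1+r)*r^(t-1) else 0) else 0)
      = ∑ j ∈ Ico k n, r^j := by
    rw [Finset.sum_Ico_eq_sum_range, Finset.sum_Ico_eq_sum_range]
    have hnk : n + 1 - (k+1) = n - k := by omega
    rw [hnk]
    refine Finset.sum_congr rfl fun j hj => ?_
    rw [if_pos (by omega), if_pos (by omega)]
    congr 1
    omega
  rw [e1, e2, L_Q]
  have e3 : ∑ j ∈ Ico k n, r^j = (∑ j ∈ range n, r^j) - ∑ j ∈ range k, r^j := by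
    rw [Finset.range_eq_Ico,
      ← Finset.sum_Ico_consecutive (fun j => r^j) (Nat.zero_le k) (by omega : k ≤ n)]
    rw [← Finset.range_eq_Ico]
    ring
  rw [e3]
  ring
end Sums

section Cone
variable {V W : Type*} [Fintype V] [Fintype W] [DecidableEq V] [DecidableEq W]

def pat (I : Finset V) (t : ℕ) (x : V) (k : ℕ) : Prop :=
  (k < t ∧ x ∈ I) ∨ (t ≤ k ∧ (k - t) % 2 = 1)

instance (I : Finset V) (t : ℕ) (x : V) (k : ℕ) : Decidable (pat I t x k) := by
  unfold pat; infer_instance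

def tOf (A R : Finset W) (τ₁ τ₂ : ℕ) (w : W) : ℕ := if w ∈ A ∩ R then τ₁ else τ₂

def conePred (n : ℕ) (I : Finset V) (A R : Finset W) (τ₁ τ₂ : ℕ) :
    HConeVert V W (fun _ => n) → Prop
  | Sum.inl x => x ∈ I
  | Sum.inr (Sum.inl s) => pat I (tOf A R τ₁ τ₂ s.1) s.2.1 ((s.2.2 : ℕ) + 1)
  | Sum.inr (Sum.inr w) => w ∈ A ∩ R

instance (n : ℕ) (I : Finset V) (A R : Finset W) (τ₁ τ₂ : ℕ) :
    DecidablePred (conePred n I A R τ₁ τ₂) := fun z => by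
  rcases z with x | s | w
  · exact inferInstanceAs (Decidable (x ∈ I))
  · exact inferInstanceAs (Decidable (pat I (tOf A R τ₁ τ₂ s.1) s.2.1 ((s.2.2 : ℕ) + 1)))
  · exact inferInstanceAs (Decidable (w ∈ A ∩ R))

noncomputable def coneSet (n : ℕ) (I : Finset V) (A R : Finset W) (τ₁ τ₂ : ℕ) :
    Finset (HConeVert V W (fun _ => n)) :=
  Finset.univ.filter (conePred n I A R τ₁ τ₂)

lemma mem_coneSet {n : ℕ} {I : Finset V} {A R : Finset W} {τ₁ τ₂ : ℕ}
    {z : HConeVert V W (fun _ => n)} :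
    z ∈ coneSet n I A R τ₁ τ₂ ↔ conePred n I A R τ₁ τ₂ z := by
  simp [coneSet]

def conePredE (n : ℕ) : HConeVert V W (fun _ => n) → Prop
  | Sum.inl _ => False
  | Sum.inr (Sum.inl s) => ((s.2.2 : ℕ) + 1) % 2 = 1
  | Sum.inr (Sum.inr _) => False

instance (n : ℕ) : DecidablePred (conePredE n (V := V) (W := W)) := fun z => by
  rcases z with x | s | w
  · exact inferInstanceAs (Decidable False)
  · exact inferInstanceAs (Decidable (((s.2.2 : ℕ) + 1) % 2 = 1))
  · exact inferInstanceAs (Decidable False)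

noncomputable def coneSetE (n : ℕ) : Finset (HConeVert V W (fun _ => n)) :=
  Finset.univ.filter (conePredE n)

lemma mem_coneSetE {n : ℕ} {z : HConeVert V W (fun _ => n)} :
    z ∈ coneSetE (V := V) (W := W) n ↔ conePredE n z := by
  simp [coneSetE]

lemma mem_coneSet_inl {n : ℕ} {I : Finset V} {A R : Finset W} {τ₁ τ₂ : ℕ} {x : V} :
    (Sum.inl x : HConeVert V W (fun _ => n)) ∈ coneSet n I A R τ₁ τ₂ ↔ x ∈ I := by
  rw [mem_coneSet]
  exact Iff.rfl

lemma mem_coneSet_apex {n : ℕ} {I : Finset V} {A R : Finset W} {τ₁ τ₂ : ℕ} {w : W} :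
    (Sum.inr (Sum.inr w) : HConeVert V W (fun _ => n)) ∈ coneSet n I A R τ₁ τ₂ ↔ w ∈ A ∩ R := by
  rw [mem_coneSet]
  exact Iff.rfl

lemma mem_coneSet_inner {n : ℕ} {I : Finset V} {A R : Finset W} {τ₁ τ₂ : ℕ} {w : W} {x : V}
    {i : Fin (n-1)} :
    (Sum.inr (Sum.inl ⟨w, x, i⟩) : HConeVert V W (fun _ => n)) ∈ coneSet n I A R τ₁ τ₂ ↔
      pat I (tOf A R τ₁ τ₂ w) x ((i : ℕ) + 1) := by
  rw [mem_coneSet]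
  exact Iff.rfl

lemma mem_coneSetE_inl {n : ℕ} {x : V} :
    ¬ ((Sum.inl x : HConeVert V W (fun _ => n)) ∈ coneSetE n) := by
  rw [mem_coneSetE]
  exact fun h => h

lemma mem_coneSetE_apex {n : ℕ} {w : W} :
    ¬ ((Sum.inr (Sum.inr w) : HConeVert V W (fun _ => n)) ∈ coneSetE n) := by
  rw [mem_coneSetE]
  exact fun h => h

lemma mem_coneSetE_inner {n : ℕ} {w : W} {x : V} {i : Fin (n-1)} :
    (Sum.inr (Sum.inl ⟨w, x, i⟩) : HConeVert V W (fun _ => n)) ∈ coneSetE n ↔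
      ((i : ℕ) + 1) % 2 = 1 := by
  rw [mem_coneSetE]
  exact Iff.rfl

variable {G : SimpleGraph V} {H : SimpleGraph W}

lemma pat_consec {I : Finset V} {t : ℕ} {x y : V} {k k' : ℕ}
    (hI : IsIndep G ↑I) (h1 : pat I t x k) (h2 : pat I t y k') (hkk : k + 1 = k')
    (hadj : G.Adj x y) : False := by
  rcases h1 with ⟨hk1, hx⟩ | ⟨hk1, hp1⟩ <;> rcases h2 with ⟨hk2, hy⟩ | ⟨hk2, hp2⟩
  · exact hI x (by simpa using hx) y (by simpa using hy) hadj
  · omega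
  · omega
  · omega

lemma coneSet_indep {n : ℕ} {I : Finset V} {A R : Finset W} {τ₁ τ₂ : ℕ}
    (hn2 : 2 ≤ n) (hne : n % 2 = 0)
    (hI : IsIndep G ↑I) (hA : IsIndep H ↑A)
    (h1o : τ₁ % 2 = 1) (h1n : τ₁ ≤ n) (h2e : τ₂ % 2 = 0) (h21 : 1 ≤ τ₂) :
    IsIndep (hConeGraph G H (fun _ => n)) ↑(coneSet n I A R τ₁ τ₂) := by
  have ht1 : ∀ w : W, 1 ≤ tOf A R τ₁ τ₂ w := by
    intro w; unfold tOf; split <;> omega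
  intro z1 hz1 z2 hz2 hadj
  rw [Finset.mem_coe, mem_coneSet] at hz1 hz2
  have hadj' : hConeAdj G H (fun _ => n) z1 z2 := hadj
  rcases z1 with x | ⟨w, x, i⟩ | w <;> rcases z2 with y | ⟨w', y, j⟩ | w' <;>
      simp only [hConeAdj] at hadj' <;> simp only [conePred] at hz1 hz2
  -- inl, inl
  · exact hI x (by simpa using hz1) y (by simpa using hz2) hadj'
  -- inl, inner
  · obtain ⟨hGxy, hj0⟩ := hadj'
    rcases hz2 with ⟨hk, hy⟩ | ⟨hk, hp⟩
    · exact hI x (by simpa using hz1) y (by simpa using hy) hGxy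
    · have := ht1 w'
      omega
  -- inl, apex
  · omega
  -- inner, inl
  · obtain ⟨hGxy, hi0⟩ := hadj'
    rcases hz1 with ⟨hk, hx⟩ | ⟨hk, hp⟩
    · exact hI y (by simpa using hz2) x (by simpa using hx) hGxy
    · have := ht1 w
      omega
  -- inner, inner
  · obtain ⟨hww, hGxy, hij⟩ := hadj'
    subst hww
    rcases hij with hij | hij
    · exact pat_consec hI hz1 hz2 (by omega) hGxy
    · exact pat_consec hI hz2 hz1 (by omega) hGxy.symm
  -- inner, apex
  · obtain ⟨hww, hin⟩ := hadj'
    subst hww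
    have htw : tOf A R τ₁ τ₂ w = τ₁ := if_pos hz2
    rw [htw] at hz1
    have hi : (i : ℕ) + 1 = n - 1 := by omega
    rcases hz1 with ⟨hk, _⟩ | ⟨hk, hp⟩ <;> omega
  -- apex, inl
  · omega
  -- apex, inner
  · obtain ⟨hww, hin⟩ := hadj'
    subst hww
    have htw : tOf A R τ₁ τ₂ w' = τ₁ := if_pos hz1
    rw [htw] at hz2
    rcases hz2 with ⟨hk, _⟩ | ⟨hk, hp⟩ <;> omega
  -- apex, apex
  · have hw1 : w ∈ A := (Finset.mem_inter.mp hz1).1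
    have hw2 : w' ∈ A := (Finset.mem_inter.mp hz2).1
    exact hA w (by simpa using hw1) w' (by simpa using hw2) hadj'

lemma coneSetE_indep {n : ℕ} (hne : n % 2 = 0) :
    IsIndep (hConeGraph G H (fun _ => n)) ↑(coneSetE (V := V) (W := W) n) := by
  intro z1 hz1 z2 hz2 hadj
  rw [Finset.mem_coe, mem_coneSetE] at hz1 hz2
  have hadj' : hConeAdj G H (fun _ => n) z1 z2 := hadj
  rcases z1 with x | ⟨w, x, i⟩ | w <;> rcases z2 with y | ⟨w', y, j⟩ | w' <;>
      simp only [hConeAdj] at hadj' <;> simp only [conePredE] at hz1 hz2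
  obtain ⟨hww, hGxy, hij⟩ := hadj'
  omega

end Cone

section Machinery
variable {V W : Type*} [Fintype V] [Fintype W] [DecidableEq V] [DecidableEq W]

lemma prodsum {α β : Type*} (s : Finset α) (t : Finset β) (φ : α → ℝ) (ψ : β → ℝ) :
    ∑ x ∈ s ×ˢ t, φ x.1 * ψ x.2 = (∑ i ∈ s, φ i) * (∑ j ∈ t, ψ j) := by
  rw [Finset.sum_product]
  exact (Finset.sum_mul_sum s t φ ψ).symm

def par (V W : Type*) [Fintype V] [Fintype W] (n : ℕ) :
    Finset (Finset W × (Finset W × (Finset V × (ℕ × ℕ)))) :=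
  Finset.univ ×ˢ (Finset.univ ×ˢ (Finset.univ ×ˢ (range (n+1) ×ˢ range (n+1))))

lemma master (n : ℕ) (φA φR : Finset W → ℝ) (Ψ : Finset V → ℕ → ℕ → ℝ) :
    ∑ p ∈ par V W n, φA p.1 * (φR p.2.1 * Ψ p.2.2.1 p.2.2.2.1 p.2.2.2.2)
      = (∑ A : Finset W, φA A) * ((∑ R : Finset W, φR R) *
        (∑ I : Finset V, ∑ t1 ∈ range (n+1), ∑ t2 ∈ range (n+1), Ψ I t1 t2)) := by
  unfold par
  rw [Finset.sum_product]
  simp only [Finset.sum_product]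
  simp only [← Finset.mul_sum, ← Finset.sum_mul]

lemma tail3 (n : ℕ) (φ : Finset V → ℝ) (ψ1 ψ2 : ℕ → ℝ) :
    ∑ I : Finset V, ∑ t1 ∈ range (n+1), ∑ t2 ∈ range (n+1), φ I * (ψ1 t1 * ψ2 t2)
      = (∑ I : Finset V, φ I) * ((∑ t ∈ range (n+1), ψ1 t) * (∑ t ∈ range (n+1), ψ2 t)) := by
  simp only [← Finset.mul_sum, ← Finset.sum_mul]

lemma tailC1 (n : ℕ) (χ : Finset V → ℕ → ℝ) (ψ2 : ℕ → ℝ) :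
    ∑ I : Finset V, ∑ t1 ∈ range (n+1), ∑ t2 ∈ range (n+1), χ I t1 * ψ2 t2
      = (∑ I : Finset V, ∑ t1 ∈ range (n+1), χ I t1) * (∑ t ∈ range (n+1), ψ2 t) := by
  simp only [← Finset.mul_sum, ← Finset.sum_mul]

lemma tailC2 (n : ℕ) (ψ1 : ℕ → ℝ) (χ : Finset V → ℕ → ℝ) :
    ∑ I : Finset V, ∑ t1 ∈ range (n+1), ∑ t2 ∈ range (n+1), ψ1 t1 * χ I t2
      = (∑ t ∈ range (n+1), ψ1 t) * (∑ I : Finset V, ∑ t2 ∈ range (n+1), χ I t2) := by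
  simp only [← Finset.mul_sum, ← Finset.sum_mul]

lemma cover_swap {α β : Type*} [Fintype α] [DecidableEq α] (P : Finset β)
    (π : β → Finset α) (m : β → ℝ) (z : α) :
    ∑ J : Finset α, (if z ∈ J then (∑ p ∈ P, if π p = J then m p else 0) else 0)
      = ∑ p ∈ P, (if z ∈ π p then m p else 0) := by
  have h1 : ∀ J : Finset α, (if z ∈ J then (∑ p ∈ P, if π p = J then m p else 0) else 0)
      = ∑ p ∈ P, (if π p = J then (if z ∈ J then m p else 0) else 0) := by
    intro J
    split
    · refine Finset.sum_congr rfl fun p _ => ?_; split <;> simp_all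
    · simp
  rw [Finset.sum_congr rfl fun J _ => h1 J, Finset.sum_comm]
  refine Finset.sum_congr rfl fun p _ => ?_
  rw [Finset.sum_ite_eq Finset.univ (π p) (fun J => if z ∈ J then m p else 0), if_pos (mem_univ _)]

lemma weight_swap {α β : Type*} [Fintype α] [DecidableEq α] (P : Finset β)
    (π : β → Finset α) (m : β → ℝ) :
    ∑ J : Finset α, (∑ p ∈ P, if π p = J then m p else 0) = ∑ p ∈ P, m p := by
  rw [Finset.sum_comm]
  refine Finset.sum_congr rfl fun p _ => ?_
  rw [Finset.sum_ite_eq Finset.univ (π p) (fun _ => m p), if_pos (mem_univ _)]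

end Machinery

set_option maxHeartbeats 2000000 in
/-- for finite simple graphs `G`, `H` with `χ_f(H) ≤ χ_f(G)` and even
`n ≥ 2`, `χ_f(Δ_{H,n}(G)) ≤ χ_f(G) + 1/(∑_{k=0}^{n-1}(χ_f(G)-1)^k)`. -/
theorem fracChi_hCone_even_upper {V W : Type*} [Fintype V] [Fintype W]
    [DecidableEq V] [DecidableEq W]
    (G : SimpleGraph V) (H : SimpleGraph W) (hHG : fracChi H ≤ fracChi G)
    (n : ℕ) (hn : 2 ≤ n) (heven : Even n) :
    fracChi (hConeGraph G H (fun _ => n)) ≤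
      fracChi G + 1 / (∑ k ∈ Finset.range n, (fracChi G - 1) ^ k) := by
  classical
  have hne : n % 2 = 0 := Nat.even_iff.mp heven
  rcases isEmpty_or_nonempty V with hV | hV
  · -- degenerate case : V empty
    have h0 : fracChi G = 0 := fracChi_empty G
    haveI hW : IsEmpty W := by
      by_contra h
      rw [not_isEmpty_iff] at h
      have h1 : (1:ℝ) ≤ fracChi H := one_le_fracChi H
      rw [h0] at hHG
      linarith
    haveI : IsEmpty (HConeVert V W (fun _ => n)) := by
      refine ⟨fun z => ?_⟩
      rcases z with x | s | w
      · exact hV.false x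
      · exact hW.false s.1
      · exact hW.false w
    have hL : fracChi (hConeGraph G H (fun _ => n)) = 0 := fracChi_empty _
    have hS : ∑ k ∈ Finset.range n, (fracChi G - 1) ^ k = 0 := by
      rw [h0]
      have h2 : ∀ k : ℕ, ((0:ℝ) - 1) ^ k = (-1 : ℝ) ^ k := by intro k; norm_num
      rw [Finset.sum_congr rfl fun k _ => h2 k]
      rw [neg_one_geom_sum, if_pos heven]
    rw [hL, hS, h0]
    norm_num
  · -- main case
    obtain ⟨f, hf, hfa⟩ := exists_opt G
    obtain ⟨g, hg, hgb⟩ := exists_opt H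
    have ha1 : 1 ≤ fracChi G := one_le_fracChi G
    set a : ℝ := fracChi G with haDef
    set b : ℝ := fracChi H with hbDef
    have ha0 : 0 < a := by linarith
    set r : ℝ := a - 1 with hrDef
    have hr0 : 0 ≤ r := by rw [hrDef]; linarith
    have har : a = 1 + r := by rw [hrDef]; ring
    set S : ℝ := ∑ k ∈ Finset.range n, r ^ k with hSDef
    have hS1 : 1 ≤ S := by
      have h01 := Finset.single_le_sum (f := fun k => r ^ k)
        (fun k _ => pow_nonneg hr0 k) (Finset.mem_range.mpr (by omega : 0 < n))
      simpa using h01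
    have hS0 : 0 < S := by linarith
    set ε : ℝ := 1 / S with hεDef
    have hε0 : 0 < ε := by rw [hεDef]; positivity
    have hε1 : ε ≤ 1 := by rw [hεDef]; rw [div_le_one hS0]; linarith
    have hεS : ε * S = 1 := by rw [hεDef]; field_simp
    have hba : b ≤ a := hHG
    have hb0 : 0 ≤ b := fracChi_nonneg H
    -- f ∅ = 0
    have hf0 : f ∅ = 0 := by
      have hup : IsFC G (Function.update f ∅ 0) := by
        refine ⟨fun I => ?_, fun I => ?_, fun I hI => ?_, fun x => ?_⟩
        · by_cases hI : I = ∅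
          · subst hI; simp
          · rw [Function.update_of_ne hI]; exact hf.zero_le I
        · by_cases hI : I = ∅
          · subst hI; simp
          · rw [Function.update_of_ne hI]; exact hf.le_one I
        · by_cases hI' : I = ∅
          · subst hI'; simp
          · rw [Function.update_of_ne hI']; exact hf.indep I hI
        · calc (1:ℝ) ≤ ∑ I : Finset V, (if x ∈ I then f I else 0) := hf.cover x
            _ = ∑ I : Finset V, (if x ∈ I then Function.update f ∅ 0 I else 0) := by
              refine Finset.sum_congr rfl fun I _ => ?_
              by_cases hI : I = ∅
              · subst hI; simp
              · rw [Function.update_of_ne hI]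
      have hsum : ∑ I : Finset V, Function.update f ∅ 0 I = a - f ∅ := by
        rw [Finset.sum_update_of_mem (Finset.mem_univ ∅)]
        have h2 : ∑ I ∈ Finset.univ \ {∅}, f I = (∑ I : Finset V, f I) - f ∅ := by
          rw [Finset.sum_sdiff_eq_sub (Finset.singleton_subset_iff.mpr (Finset.mem_univ ∅))]
          simp
        rw [h2, hfa]
        ring
      have hle := fracChi_le G hup
      rw [hsum] at hle
      have h3 := hf.zero_le ∅
      rw [← haDef] at hle
      linarith
    have hg0 : g ∅ = 0 := by
      have hup : IsFC H (Function.update g ∅ 0) := by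
        refine ⟨fun I => ?_, fun I => ?_, fun I hI => ?_, fun x => ?_⟩
        · by_cases hI : I = ∅
          · subst hI; simp
          · rw [Function.update_of_ne hI]; exact hg.zero_le I
        · by_cases hI : I = ∅
          · subst hI; simp
          · rw [Function.update_of_ne hI]; exact hg.le_one I
        · by_cases hI' : I = ∅
          · subst hI'; simp
          · rw [Function.update_of_ne hI']; exact hg.indep I hI
        · calc (1:ℝ) ≤ ∑ I : Finset W, (if x ∈ I then g I else 0) := hg.cover x
            _ = ∑ I : Finset W, (if x ∈ I then Function.update g ∅ 0 I else 0) := by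
              refine Finset.sum_congr rfl fun I _ => ?_
              by_cases hI : I = ∅
              · subst hI; simp
              · rw [Function.update_of_ne hI]
      have hsum : ∑ I : Finset W, Function.update g ∅ 0 I = b - g ∅ := by
        rw [Finset.sum_update_of_mem (Finset.mem_univ ∅)]
        have h2 : ∑ I ∈ Finset.univ \ {∅}, g I = (∑ I : Finset W, g I) - g ∅ := by
          rw [Finset.sum_sdiff_eq_sub (Finset.singleton_subset_iff.mpr (Finset.mem_univ ∅))]
          simp
        rw [h2, hgb]
        ring
      have hle := fracChi_le H hup
      rw [hsum] at hle
      have h3 := hg.zero_le ∅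
      rw [← hbDef] at hle
      linarith
    -- the H-side data
    set mw : W → ℝ := fun w => ∑ A : Finset W, (if w ∈ A then g A else 0) with hmwDef
    have hmw1 : ∀ w, 1 ≤ mw w := fun w => hg.cover w
    have hmw0 : ∀ w, 0 < mw w := fun w => lt_of_lt_of_le one_pos (hmw1 w)
    set vv : W → ℝ := fun w => 1 / mw w with hvvDef
    have hvv0 : ∀ w, 0 ≤ vv w := fun w => by
      rw [hvvDef]; exact div_nonneg zero_le_one (hmw0 w).le
    have hvv1 : ∀ w, vv w ≤ 1 := fun w => by
      rw [hvvDef]; exact (div_le_one (hmw0 w)).mpr (hmw1 w)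
    have hvvm : ∀ w, mw w * vv w = 1 := fun w => by
      rw [hvvDef]; exact mul_one_div_cancel (hmw0 w).ne'
    set gh : Finset W → ℝ := Function.update g ∅ (a - b) with hghDef
    have hghnn : ∀ A, 0 ≤ gh A := by
      intro A
      by_cases hA : A = ∅
      · subst hA; rw [hghDef, Function.update_self]; linarith
      · rw [hghDef, Function.update_of_ne hA]; exact hg.zero_le A
    have hghind : ∀ A : Finset W, gh A ≠ 0 → IsIndep H ↑A := by
      intro A hA0
      by_cases hA : A = ∅
      · subst hA
        intro x hx
        simp at hx
      · rw [hghDef, Function.update_of_ne hA] at hA0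
        by_contra hind
        exact hA0 (hg.indep A hind)
    have hghtot : ∑ A : Finset W, gh A = a := by
      rw [hghDef, Finset.sum_update_of_mem (Finset.mem_univ ∅)]
      have h2 : ∑ I ∈ Finset.univ \ {∅}, g I = (∑ I : Finset W, g I) - g ∅ := by
        rw [Finset.sum_sdiff_eq_sub (Finset.singleton_subset_iff.mpr (Finset.mem_univ ∅))]
        simp
      rw [h2, hgb, hg0]
      ring
    have hghw : ∀ w, ∑ A : Finset W, (if w ∈ A then gh A else 0) = mw w := by
      intro w
      rw [hmwDef]
      refine Finset.sum_congr rfl fun A _ => ?_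
      by_cases hA : A = ∅
      · subst hA; simp
      · rw [hghDef, Function.update_of_ne hA]
    set Ber : Finset W → ℝ :=
      fun R => (∏ w ∈ R, vv w) * (∏ w ∈ Finset.univ \ R, (1 - vv w)) with hBerDef
    have hBernn : ∀ R, 0 ≤ Ber R := by
      intro R
      rw [hBerDef]
      refine mul_nonneg (Finset.prod_nonneg fun w _ => hvv0 w)
        (Finset.prod_nonneg fun w _ => by linarith [hvv1 w])
    have hBer1 : ∑ R : Finset W, Ber R = 1 := by
      have key := Finset.prod_add vv (fun w' => 1 - vv w') Finset.univ
      rw [Finset.powerset_univ] at key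
      calc ∑ R : Finset W, Ber R
          = ∏ w' ∈ Finset.univ, (vv w' + (1 - vv w')) := key.symm
        _ = 1 := Finset.prod_eq_one fun w' _ => by ring
    have hBerw : ∀ w : W, ∑ R : Finset W, (if w ∈ R then Ber R else 0) = vv w := by
      intro w
      have key := Finset.prod_add vv (fun w' => if w' = w then 0 else 1 - vv w') Finset.univ
      rw [Finset.powerset_univ] at key
      have hR : ∑ R : Finset W,
          (∏ w' ∈ R, vv w') * (∏ w' ∈ Finset.univ \ R, (if w' = w then 0 else 1 - vv w'))
          = ∑ R : Finset W, (if w ∈ R then Ber R else 0) := by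
        refine Finset.sum_congr rfl fun R _ => ?_
        by_cases hw : w ∈ R
        · rw [if_pos hw, hBerDef]
          congr 1
          refine Finset.prod_congr rfl fun w' hw' => ?_
          rw [if_neg]
          intro hww'
          subst hww'
          exact (Finset.mem_sdiff.mp hw').2 hw
        · rw [if_neg hw]
          have hzero : ∏ w' ∈ Finset.univ \ R, (if w' = w then 0 else 1 - vv w') = 0 :=
            Finset.prod_eq_zero (Finset.mem_sdiff.mpr ⟨Finset.mem_univ w, hw⟩) (if_pos rfl)
          rw [hzero, mul_zero]
      have hL : ∏ w' ∈ Finset.univ, (vv w' + (if w' = w then 0 else 1 - vv w')) = vv w := by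
        have hfac : ∀ w' ∈ Finset.univ,
            (vv w' + (if w' = w then 0 else 1 - vv w')) = (if w = w' then vv w' else 1) := by
          intro w' _
          by_cases h : w' = w
          · subst h; rw [if_pos rfl, if_pos rfl]; ring
          · rw [if_neg h, if_neg (fun hh => h hh.symm)]; ring
        calc ∏ w' ∈ Finset.univ, (vv w' + (if w' = w then 0 else 1 - vv w'))
            = ∏ w' ∈ Finset.univ, (if w = w' then vv w' else 1) := Finset.prod_congr rfl hfac
          _ = vv w := by
              rw [Finset.prod_ite_eq Finset.univ w vv, if_pos (Finset.mem_univ w)]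
      rw [← hR, ← key]
      exact hL
    -- the layer distributions
    set co : ℕ → ℝ := fun t => ε * (if t % 2 = 1 then (1+r)*r^(t-1) else 0) with hcoDef
    set ce : ℕ → ℝ := fun t => ε * (if t % 2 = 0 ∧ 2 ≤ t then (1+r)*r^(t-2) else 0) with hceDef
    have hconn : ∀ t, 0 ≤ co t := by
      intro t; rw [hcoDef]; dsimp only; split
      · positivity
      · simp
    have hcenn : ∀ t, 0 ≤ ce t := by
      intro t; rw [hceDef]; dsimp only; split
      · positivity
      · simp
    have hco1 : ∑ t ∈ range (n+1), co t = 1 := by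
      rw [hcoDef, ← Finset.mul_sum, L_co r n hne, ← hSDef, hεS]
    have hce1 : ∑ t ∈ range (n+1), ce t = 1 := by
      rw [hceDef, ← Finset.mul_sum, L_ce r n hne, ← hSDef, hεS]
    -- the colouring
    set π : (Finset W × (Finset W × (Finset V × (ℕ × ℕ)))) → Finset (HConeVert V W (fun _ => n)) :=
      fun p => coneSet n p.2.2.1 p.1 p.2.1 p.2.2.2.1 p.2.2.2.2 with hπDef
    set μ : (Finset W × (Finset W × (Finset V × (ℕ × ℕ)))) → ℝ :=
      fun p => gh p.1 * (Ber p.2.1 * ((f p.2.2.1 / a) * (co p.2.2.2.1 * ce p.2.2.2.2))) with hμDef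
    have hμnn : ∀ p, 0 ≤ μ p := by
      intro p
      rw [hμDef]
      exact mul_nonneg (hghnn _) (mul_nonneg (hBernn _) (mul_nonneg
        (div_nonneg (hf.zero_le _) ha0.le) (mul_nonneg (hconn _) (hcenn _))))
    set Fcol : Finset (HConeVert V W (fun _ => n)) → ℝ := fun J =>
      (∑ p ∈ par V W n, if π p = J then μ p else 0) +
        (if J = coneSetE n then ε else 0) with hFDef
    -- obligations
    have hOnn : ∀ J, 0 ≤ Fcol J := by
      intro J
      simp only [hFDef]
      refine add_nonneg (Finset.sum_nonneg fun p _ => ?_) ?_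
      · split
        · exact hμnn p
        · exact le_rfl
      · split
        · exact hε0.le
        · exact le_rfl
    have hμtot : ∑ p ∈ par V W n, μ p = a := by
      rw [hμDef]
      rw [master n gh Ber (fun I t1 t2 => (f I / a) * (co t1 * ce t2))]
      rw [tail3 n (fun I => f I / a) co ce, hghtot, hBer1, hco1, hce1, ← Finset.sum_div, hfa]
      field_simp
    have hOweight : ∑ J : Finset (HConeVert V W (fun _ => n)), Fcol J = a + ε := by
      simp only [hFDef]
      rw [Finset.sum_add_distrib]
      rw [weight_swap (par V W n) π μ, hμtot]
      congr 1
      rw [Finset.sum_ite_eq' Finset.univ (coneSetE n) (fun _ => ε), if_pos (Finset.mem_univ _)]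
    have hOle1 : ∀ J, Fcol J ≤ 1 := by
      intro J
      simp only [hFDef]
      set ι : Finset V :=
        Finset.univ.filter (fun x => (Sum.inl x : HConeVert V W (fun _ => n)) ∈ J) with hιDef
      have hM : ∑ p ∈ par V W n, (if π p = J then μ p else 0) ≤ f ι := by
        have hstep : ∀ p, (if π p = J then μ p else 0) ≤ (if p.2.2.1 = ι then μ p else 0) := by
          intro p
          by_cases hπp : π p = J
          · rw [if_pos hπp, if_pos ?_]
            rw [hιDef]
            ext x
            simp only [Finset.mem_filter, Finset.mem_univ, true_and]
            rw [← hπp, hπDef]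
            exact mem_coneSet_inl.symm
          · rw [if_neg hπp]
            split
            · exact hμnn p
            · exact le_rfl
        calc ∑ p ∈ par V W n, (if π p = J then μ p else 0)
            ≤ ∑ p ∈ par V W n, (if p.2.2.1 = ι then μ p else 0) :=
              Finset.sum_le_sum (fun p _ => hstep p)
          _ = f ι := by
            have hpt : ∀ p : (Finset W × (Finset W × (Finset V × (ℕ × ℕ)))),
                (if p.2.2.1 = ι then μ p else 0)
                = gh p.1 * (Ber p.2.1 * ((if p.2.2.1 = ι then f p.2.2.1 / a else 0) *
                  (co p.2.2.2.1 * ce p.2.2.2.2))) := by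
              intro p
              by_cases h : p.2.2.1 = ι
              · rw [if_pos h, if_pos h, hμDef]
              · rw [if_neg h, if_neg h]
                ring
            rw [Finset.sum_congr rfl fun p _ => hpt p,
              master n gh Ber (fun I t1 t2 => (if I = ι then f I / a else 0) * (co t1 * ce t2)),
              tail3 n (fun I => if I = ι then f I / a else 0) co ce,
              hghtot, hBer1, hco1, hce1,
              Finset.sum_ite_eq' Finset.univ ι (fun I => f I / a), if_pos (Finset.mem_univ _)]
            field_simp
      by_cases hJE : J = coneSetE n
      · have hι0 : ι = ∅ := by
          rw [hιDef, hJE]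
          ext x
          simp only [Finset.mem_filter, Finset.mem_univ, true_and, Finset.notMem_empty,
            iff_false]
          exact mem_coneSetE_inl
        rw [if_pos hJE]
        have := hf.le_one ι
        calc (∑ p ∈ par V W n, if π p = J then μ p else 0) + ε ≤ f ι + ε :=
              add_le_add hM le_rfl
          _ = ε := by rw [hι0, hf0]; ring
          _ ≤ 1 := hε1
      · rw [if_neg hJE]
        calc (∑ p ∈ par V W n, if π p = J then μ p else 0) + 0 ≤ f ι + 0 :=
              add_le_add hM le_rfl
          _ ≤ 1 := by rw [add_zero]; exact hf.le_one ι
    have hOsupp : ∀ J : Finset (HConeVert V W (fun _ => n)),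
        ¬ IsIndep (hConeGraph G H (fun _ => n)) ↑J → Fcol J = 0 := by
      intro J hJ
      simp only [hFDef]
      have h1 : ∑ p ∈ par V W n, (if π p = J then μ p else 0) = 0 := by
        refine Finset.sum_eq_zero fun p hp => ?_
        by_cases hπp : π p = J
        case neg => rw [if_neg hπp]
        rw [if_pos hπp]
        by_contra hμ0
        have hgh0 : gh p.1 ≠ 0 := fun h => hμ0 (by rw [hμDef]; dsimp only; rw [h, zero_mul])
        have hfI0 : f p.2.2.1 ≠ 0 := fun h => hμ0 (by rw [hμDef]; dsimp only; rw [h]; ring)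
        have hcoτ : co p.2.2.2.1 ≠ 0 := fun h => hμ0 (by rw [hμDef]; dsimp only; rw [h]; ring)
        have hceτ : ce p.2.2.2.2 ≠ 0 := fun h => hμ0 (by rw [hμDef]; dsimp only; rw [h]; ring)
        have hIind : IsIndep G ↑p.2.2.1 := by
          by_contra hind
          exact hfI0 (hf.indep _ hind)
        have hAind : IsIndep H ↑p.1 := hghind p.1 hgh0
        have hτ1odd : p.2.2.2.1 % 2 = 1 := by
          by_contra hodd
          exact hcoτ (by rw [hcoDef]; dsimp only; rw [if_neg hodd, mul_zero])
        have hτ2even : p.2.2.2.2 % 2 = 0 ∧ 2 ≤ p.2.2.2.2 := by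
          by_contra hev
          exact hceτ (by rw [hceDef]; dsimp only; rw [if_neg hev, mul_zero])
        have hpmem : p.2.2.2.1 < n + 1 ∧ p.2.2.2.2 < n + 1 := by
          have hp' := hp
          unfold par at hp'
          simp only [Finset.mem_product, Finset.mem_univ, Finset.mem_range, true_and] at hp'
          exact hp'
        have hind := coneSet_indep (G := G) (H := H)
          (n := n) (I := p.2.2.1) (A := p.1) (R := p.2.1)
          (τ₁ := p.2.2.2.1) (τ₂ := p.2.2.2.2) hn hne hIind hAind hτ1odd
          (by omega) hτ2even.1 (by omega)
        apply hJ
        rw [← hπp, hπDef]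
        exact hind
      rw [h1]
      by_cases hJE : J = coneSetE n
      · exfalso
        apply hJ
        rw [hJE]
        exact coneSetE_indep hne
      · rw [if_neg hJE, add_zero]
    have hswap : ∀ z : HConeVert V W (fun _ => n),
        ∑ J : Finset (HConeVert V W (fun _ => n)), (if z ∈ J then Fcol J else 0)
        = (∑ p ∈ par V W n, if z ∈ π p then μ p else 0) +
          (if z ∈ coneSetE n then ε else 0) := by
      intro z
      have hsplit : ∀ J : Finset (HConeVert V W (fun _ => n)), (if z ∈ J then Fcol J else 0)
          = (if z ∈ J then (∑ p ∈ par V W n, if π p = J then μ p else 0) else 0)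
            + (if z ∈ J then (if J = coneSetE n then ε else 0) else 0) := by
        intro J
        simp only [hFDef]
        split <;> simp
      rw [Finset.sum_congr rfl fun J _ => hsplit J, Finset.sum_add_distrib,
        cover_swap (par V W n) π μ z]
      congr 1
      have h2 : ∀ J : Finset (HConeVert V W (fun _ => n)),
          (if z ∈ J then (if J = coneSetE n then ε else 0) else 0)
          = (if J = coneSetE n then (if z ∈ J then ε else 0) else 0) := by
        intro J
        by_cases hz : z ∈ J <;> by_cases hJ : J = coneSetE n <;> simp [hz, hJ]
      rw [Finset.sum_congr rfl fun J _ => h2 J,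
        Finset.sum_ite_eq' Finset.univ (coneSetE n) (fun J => if z ∈ J then ε else 0),
        if_pos (Finset.mem_univ _)]
    have hOcover : ∀ z : HConeVert V W (fun _ => n),
        1 ≤ ∑ J : Finset (HConeVert V W (fun _ => n)), (if z ∈ J then Fcol J else 0) := by
      intro z
      rw [hswap z]
      rcases z with x | s | w
      · -- base vertex
        have hpt : ∀ p : (Finset W × (Finset W × (Finset V × (ℕ × ℕ)))),
            (if (Sum.inl x : HConeVert V W (fun _ => n)) ∈ π p then μ p else 0)
            = gh p.1 * (Ber p.2.1 * (((if x ∈ p.2.2.1 then f p.2.2.1 else 0) / a) *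
              (co p.2.2.2.1 * ce p.2.2.2.2))) := by
          intro p
          simp only [hπDef]
          by_cases hx : x ∈ p.2.2.1
          · rw [if_pos (mem_coneSet_inl.mpr hx), if_pos hx, hμDef]
          · rw [if_neg (fun hmem => hx (mem_coneSet_inl.mp hmem)), if_neg hx, zero_div]
            ring
        rw [Finset.sum_congr rfl fun p _ => hpt p,
          master n gh Ber (fun I t1 t2 => ((if x ∈ I then f I else 0) / a) * (co t1 * ce t2)),
          tail3 n (fun I => (if x ∈ I then f I else 0) / a) co ce,
          hghtot, hBer1, hco1, hce1, ← Finset.sum_div]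
        have hcovx := hf.cover x
        have hE : (0:ℝ) ≤ (if (Sum.inl x : HConeVert V W (fun _ => n)) ∈ coneSetE n
            then ε else 0) := by
          split
          · exact hε0.le
          · exact le_rfl
        have harith : a * (1 * ((∑ I : Finset V, if x ∈ I then f I else 0) / a * (1 * 1)))
            = ∑ I : Finset V, (if x ∈ I then f I else 0) := by
          field_simp
        rw [harith]
        linarith
      · -- inner vertex
        obtain ⟨w, x, i⟩ := s
        have hkn : (i : ℕ) + 1 < n := by
          have hlt : (i : ℕ) < n - 1 := i.isLt
          omega
        have har0 : (1:ℝ) + r ≠ 0 := by rw [← har]; exact ha0.ne'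
        have hpt : ∀ p : (Finset W × (Finset W × (Finset V × (ℕ × ℕ)))),
            (if (Sum.inr (Sum.inl ⟨w, x, i⟩) : HConeVert V W (fun _ => n)) ∈ π p
              then μ p else 0)
            = (if w ∈ p.1 then gh p.1 else 0) * ((if w ∈ p.2.1 then Ber p.2.1 else 0) *
                ((f p.2.2.1 / a) * ((if pat p.2.2.1 p.2.2.2.1 x ((i:ℕ)+1)
                    then co p.2.2.2.1 else 0) * ce p.2.2.2.2)))
              + (gh p.1 * (Ber p.2.1 * ((f p.2.2.1 / a) * (co p.2.2.2.1 *
                  (if pat p.2.2.1 p.2.2.2.2 x ((i:ℕ)+1) then ce p.2.2.2.2 else 0))))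
                - (if w ∈ p.1 then gh p.1 else 0) * ((if w ∈ p.2.1 then Ber p.2.1 else 0) *
                  ((f p.2.2.1 / a) * (co p.2.2.2.1 *
                    (if pat p.2.2.1 p.2.2.2.2 x ((i:ℕ)+1) then ce p.2.2.2.2 else 0))))) := by
          intro p
          simp only [hπDef, mem_coneSet_inner]
          by_cases h1 : w ∈ p.1 <;> by_cases h2 : w ∈ p.2.1
          · have htof : tOf p.1 p.2.1 p.2.2.2.1 p.2.2.2.2 w = p.2.2.2.1 :=
              if_pos (Finset.mem_inter.mpr ⟨h1, h2⟩)
            rw [htof]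
            by_cases hp : pat p.2.2.1 p.2.2.2.1 x ((i:ℕ)+1) <;>
              by_cases hq : pat p.2.2.1 p.2.2.2.2 x ((i:ℕ)+1) <;>
              simp only [hμDef, hp, hq, h1, h2, if_true, if_false, eq_self_iff_true] <;>
              ring
          all_goals
            have htof : tOf p.1 p.2.1 p.2.2.2.1 p.2.2.2.2 w = p.2.2.2.2 :=
              if_neg (fun hm => by
                have hmm := Finset.mem_inter.mp hm
                tauto)
          all_goals
            rw [htof]
          all_goals
            by_cases hq : pat p.2.2.1 p.2.2.2.2 x ((i:ℕ)+1) <;>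
              simp only [hμDef, hq, h1, h2, if_true, if_false, eq_self_iff_true] <;>
              ring
        rw [Finset.sum_congr rfl fun p _ => hpt p, Finset.sum_add_distrib,
          Finset.sum_sub_distrib,
          master n (fun A => if w ∈ A then gh A else 0) (fun R => if w ∈ R then Ber R else 0)
            (fun I t1 t2 => (f I / a) * ((if pat I t1 x ((i:ℕ)+1) then co t1 else 0) * ce t2)),
          master n gh Ber
            (fun I t1 t2 => (f I / a) * (co t1 * (if pat I t2 x ((i:ℕ)+1) then ce t2 else 0))),
          master n (fun A => if w ∈ A then gh A else 0) (fun R => if w ∈ R then Ber R else 0)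
            (fun I t1 t2 => (f I / a) * (co t1 * (if pat I t2 x ((i:ℕ)+1) then ce t2 else 0))),
          hghw w, hBerw w, hghtot, hBer1]
        have htail1 : ∑ I : Finset V, ∑ t1 ∈ range (n+1), ∑ t2 ∈ range (n+1),
            (f I / a) * ((if pat I t1 x ((i:ℕ)+1) then co t1 else 0) * ce t2)
            = ∑ I : Finset V, ∑ t ∈ range (n+1),
              (f I / a) * (if pat I t x ((i:ℕ)+1) then co t else 0) := by
          calc ∑ I : Finset V, ∑ t1 ∈ range (n+1), ∑ t2 ∈ range (n+1),
              (f I / a) * ((if pat I t1 x ((i:ℕ)+1) then co t1 else 0) * ce t2)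
              = ∑ I : Finset V, ∑ t1 ∈ range (n+1), ∑ t2 ∈ range (n+1),
                ((f I / a) * (if pat I t1 x ((i:ℕ)+1) then co t1 else 0)) * ce t2 :=
              Finset.sum_congr rfl fun I _ => Finset.sum_congr rfl fun t1 _ =>
                Finset.sum_congr rfl fun t2 _ => by ring
            _ = (∑ I : Finset V, ∑ t ∈ range (n+1),
                (f I / a) * (if pat I t x ((i:ℕ)+1) then co t else 0)) * 1 := by
              rw [tailC1 n (fun I t1 => (f I / a) * (if pat I t1 x ((i:ℕ)+1) then co t1 else 0))
                ce, hce1]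
            _ = _ := mul_one _
        have htail2 : ∑ I : Finset V, ∑ t1 ∈ range (n+1), ∑ t2 ∈ range (n+1),
            (f I / a) * (co t1 * (if pat I t2 x ((i:ℕ)+1) then ce t2 else 0))
            = ∑ I : Finset V, ∑ t ∈ range (n+1),
              (f I / a) * (if pat I t x ((i:ℕ)+1) then ce t else 0) := by
          calc ∑ I : Finset V, ∑ t1 ∈ range (n+1), ∑ t2 ∈ range (n+1),
              (f I / a) * (co t1 * (if pat I t2 x ((i:ℕ)+1) then ce t2 else 0))
              = ∑ I : Finset V, ∑ t1 ∈ range (n+1), ∑ t2 ∈ range (n+1),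
                co t1 * ((f I / a) * (if pat I t2 x ((i:ℕ)+1) then ce t2 else 0)) :=
              Finset.sum_congr rfl fun I _ => Finset.sum_congr rfl fun t1 _ =>
                Finset.sum_congr rfl fun t2 _ => by ring
            _ = 1 * (∑ I : Finset V, ∑ t ∈ range (n+1),
                (f I / a) * (if pat I t x ((i:ℕ)+1) then ce t else 0)) := by
              rw [tailC2 n co (fun I t2 => (f I / a) * (if pat I t2 x ((i:ℕ)+1) then ce t2 else 0)),
                hco1]
            _ = _ := one_mul _
        rw [htail1, htail2]
        have hEeq : (if (Sum.inr (Sum.inl ⟨w, x, i⟩) : HConeVert V W (fun _ => n)) ∈ coneSetE n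
            then ε else 0) = (if ((i:ℕ)+1) % 2 = 1 then ε else 0) := by
          by_cases hpar : ((i:ℕ)+1) % 2 = 1
          · rw [if_pos (mem_coneSetE_inner.mpr hpar), if_pos hpar]
          · rw [if_neg (fun hm => hpar (mem_coneSetE_inner.mp hm)), if_neg hpar]
        rw [hEeq]
        -- bound lemma
        have hcovx := hf.cover x
        have hDbound : ∀ c : ℕ → ℝ, (∀ t, 0 ≤ c t) →
            (∑ t ∈ range (n+1), (if (i:ℕ)+1 < t then c t * (1/a)
              else (if ((i:ℕ)+1 - t) % 2 = 1 then c t else 0)))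
            ≤ ∑ I : Finset V, ∑ t ∈ range (n+1),
                (f I / a) * (if pat I t x ((i:ℕ)+1) then c t else 0) := by
          intro c hc
          rw [Finset.sum_comm]
          refine Finset.sum_le_sum fun t _ => ?_
          by_cases hkt : (i:ℕ)+1 < t
          · rw [if_pos hkt]
            have hpat : ∀ I : Finset V, pat I t x ((i:ℕ)+1) ↔ x ∈ I := by
              intro I
              constructor
              · rintro (⟨_, hx⟩ | ⟨hle, _⟩)
                · exact hx
                · omega
              · exact fun hx => Or.inl ⟨hkt, hx⟩
            have hstep : ∀ I : Finset V,
                (f I / a) * (if pat I t x ((i:ℕ)+1) then c t else 0)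
                = (if x ∈ I then f I else 0) * (c t / a) := by
              intro I
              by_cases hx : x ∈ I
              · rw [if_pos ((hpat I).mpr hx), if_pos hx]; ring
              · rw [if_neg (fun hp => hx ((hpat I).mp hp)), if_neg hx]; ring
            rw [Finset.sum_congr rfl fun I _ => hstep I, ← Finset.sum_mul]
            calc c t * (1 / a) = 1 * (c t / a) := by ring
              _ ≤ (∑ I : Finset V, if x ∈ I then f I else 0) * (c t / a) :=
                mul_le_mul_of_nonneg_right hcovx (div_nonneg (hc t) ha0.le)
          · rw [if_neg hkt]
            have hpat : ∀ I : Finset V, pat I t x ((i:ℕ)+1) ↔ ((i:ℕ)+1 - t) % 2 = 1 := by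
              intro I
              constructor
              · rintro (⟨hlt, _⟩ | ⟨_, hp⟩)
                · omega
                · exact hp
              · exact fun hp => Or.inr ⟨by omega, hp⟩
            by_cases hpar : ((i:ℕ)+1 - t) % 2 = 1
            · rw [if_pos hpar]
              have hstep : ∀ I : Finset V,
                  (f I / a) * (if pat I t x ((i:ℕ)+1) then c t else 0) = f I * (c t / a) := by
                intro I
                rw [if_pos ((hpat I).mpr hpar)]; ring
              rw [Finset.sum_congr rfl fun I _ => hstep I, ← Finset.sum_mul, hfa]
              refine le_of_eq ?_
              field_simp
            · rw [if_neg hpar]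
              refine Finset.sum_nonneg fun I _ => ?_
              refine mul_nonneg (div_nonneg (hf.zero_le I) ha0.le) ?_
              split
              · exact hc t
              · exact le_rfl
        -- the key identity
        have hptc : ∀ t ∈ range (n+1),
            ((if (i:ℕ)+1 < t then co t * (1/a)
              else (if ((i:ℕ)+1 - t) % 2 = 1 then co t else 0))
            + r * (if (i:ℕ)+1 < t then ce t * (1/a)
              else (if ((i:ℕ)+1 - t) % 2 = 1 then ce t else 0)))
            = ε * (if 1 ≤ t then (if (i:ℕ)+1 < t then r^(t-1)
                else if ((i:ℕ)+1 - t) % 2 = 1 then (1+r)*r^(t-1) else 0) else 0) := by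
          intro t _
          by_cases hkt : (i:ℕ)+1 < t
          · rw [if_pos hkt, if_pos hkt, if_pos (by omega : 1 ≤ t), if_pos hkt]
            rcases Nat.even_or_odd t with ht | ht
            · have ht2 : t % 2 = 0 := Nat.even_iff.mp ht
              have ht2' : 2 ≤ t := by omega
              rw [hcoDef, hceDef]
              dsimp only
              rw [if_neg (by omega), if_pos ⟨ht2, ht2'⟩]
              have hpow : r ^ (t-1) = r ^ (t-2) * r := by
                rw [← pow_succ]
                congr 1
                omega
              rw [har, hpow]
              field_simp
              ring
            · have ht2 : t % 2 = 1 := Nat.odd_iff.mp ht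
              rw [hcoDef, hceDef]
              dsimp only
              rw [if_pos ht2, if_neg (by omega)]
              rw [har]
              field_simp
              ring
          · rw [if_neg hkt, if_neg hkt]
            by_cases hpar : ((i:ℕ)+1 - t) % 2 = 1
            · rw [if_pos hpar, if_pos hpar]
              by_cases ht1 : 1 ≤ t
              · rw [if_pos ht1, if_neg hkt, if_pos hpar]
                rcases Nat.even_or_odd t with ht | ht
                · have ht2 : t % 2 = 0 := Nat.even_iff.mp ht
                  have ht2' : 2 ≤ t := by omega
                  rw [hcoDef, hceDef]
                  dsimp only
                  rw [if_neg (by omega), if_pos ⟨ht2, ht2'⟩]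
                  have hpow : r ^ (t-1) = r ^ (t-2) * r := by
                    rw [← pow_succ]
                    congr 1
                    omega
                  rw [hpow]
                  ring
                · have ht2 : t % 2 = 1 := Nat.odd_iff.mp ht
                  rw [hcoDef, hceDef]
                  dsimp only
                  rw [if_pos ht2, if_neg (by omega)]
                  ring
              · have ht0 : t = 0 := by omega
                subst ht0
                rw [if_neg ht1, hcoDef, hceDef]
                norm_num
            · rw [if_neg hpar, if_neg hpar]
              by_cases ht1 : 1 ≤ t
              · rw [if_pos ht1, if_neg hkt, if_neg hpar]
                ring
              · rw [if_neg ht1]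
                ring
        have hkey : (∑ t ∈ range (n+1), (if (i:ℕ)+1 < t then co t * (1/a)
              else (if ((i:ℕ)+1 - t) % 2 = 1 then co t else 0)))
            + r * (∑ t ∈ range (n+1), (if (i:ℕ)+1 < t then ce t * (1/a)
              else (if ((i:ℕ)+1 - t) % 2 = 1 then ce t else 0)))
            + (if ((i:ℕ)+1) % 2 = 1 then ε else 0) = 1 := by
          rw [Finset.mul_sum, ← Finset.sum_add_distrib,
            Finset.sum_congr rfl hptc, ← Finset.mul_sum]
          have hLID := L_ID r ((i:ℕ)+1) n (by omega) hkn
          by_cases hkodd : ((i:ℕ)+1) % 2 = 1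
          · rw [if_pos hkodd] at hLID ⊢
            have hsum : (∑ t ∈ range (n+1), (if 1 ≤ t then (if (i:ℕ)+1 < t then r^(t-1)
                else if ((i:ℕ)+1 - t) % 2 = 1 then (1+r)*r^(t-1) else 0) else 0)) = S - 1 := by
              rw [hSDef]
              linarith
            rw [hsum]
            have : ε * (S - 1) + ε = ε * S := by ring
            rw [this, hεS]
          · rw [if_neg hkodd] at hLID ⊢
            have hsum : (∑ t ∈ range (n+1), (if 1 ≤ t then (if (i:ℕ)+1 < t then r^(t-1)
                else if ((i:ℕ)+1 - t) % 2 = 1 then (1+r)*r^(t-1) else 0) else 0)) = S := by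
              rw [hSDef]
              linarith
            rw [hsum, add_zero, hεS]
        -- conclude
        have hB1 := hDbound co hconn
        have hB2 := hDbound ce hcenn
        have hB2' := mul_le_mul_of_nonneg_left hB2 hr0
        have hexp : a * (1 * (∑ I : Finset V, ∑ t ∈ range (n+1),
            (f I / a) * (if pat I t x ((i:ℕ)+1) then ce t else 0)))
            = r * (∑ I : Finset V, ∑ t ∈ range (n+1),
              (f I / a) * (if pat I t x ((i:ℕ)+1) then ce t else 0))
            + (∑ I : Finset V, ∑ t ∈ range (n+1),
              (f I / a) * (if pat I t x ((i:ℕ)+1) then ce t else 0)) := by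
          rw [har]
          ring
        have hmv : ∀ c : ℝ, mw w * (vv w * c) = c := fun c => by
          calc mw w * (vv w * c) = (mw w * vv w) * c := by ring
            _ = c := by rw [hvvm w]; ring
        rw [hmv, hmv, hexp]
        linarith
      · -- apex vertex
        have hpt : ∀ p : (Finset W × (Finset W × (Finset V × (ℕ × ℕ)))),
            (if (Sum.inr (Sum.inr w) : HConeVert V W (fun _ => n)) ∈ π p then μ p else 0)
            = (if w ∈ p.1 then gh p.1 else 0) * ((if w ∈ p.2.1 then Ber p.2.1 else 0) *
              ((f p.2.2.1 / a) * (co p.2.2.2.1 * ce p.2.2.2.2))) := by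
          intro p
          simp only [hπDef]
          by_cases h1 : w ∈ p.1 <;> by_cases h2 : w ∈ p.2.1
          · rw [if_pos (mem_coneSet_apex.mpr (Finset.mem_inter.mpr ⟨h1, h2⟩)),
              if_pos h1, if_pos h2, hμDef]
          · rw [if_neg (fun hm => h2 (Finset.mem_inter.mp (mem_coneSet_apex.mp hm)).2),
              if_pos h1, if_neg h2]
            ring
          · rw [if_neg (fun hm => h1 (Finset.mem_inter.mp (mem_coneSet_apex.mp hm)).1),
              if_neg h1]
            ring
          · rw [if_neg (fun hm => h1 (Finset.mem_inter.mp (mem_coneSet_apex.mp hm)).1),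
              if_neg h1]
            ring
        rw [Finset.sum_congr rfl fun p _ => hpt p,
          master n (fun A => if w ∈ A then gh A else 0) (fun R => if w ∈ R then Ber R else 0)
            (fun I t1 t2 => (f I / a) * (co t1 * ce t2)),
          tail3 n (fun I => f I / a) co ce,
          hghw w, hBerw w, hco1, hce1, ← Finset.sum_div, hfa]
        have hE : (0:ℝ) ≤ (if (Sum.inr (Sum.inr w) : HConeVert V W (fun _ => n)) ∈ coneSetE n
            then ε else 0) := by
          split
          · exact hε0.le
          · exact le_rfl
        have harith : mw w * (vv w * (a / a * (1 * 1))) = 1 := by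
          rw [div_self ha0.ne']
          calc mw w * (vv w * (1 * (1 * 1))) = mw w * vv w := by ring
            _ = 1 := hvvm w
        rw [harith]
        linarith
    have hIsFC : IsFC (hConeGraph G H (fun _ => n)) Fcol := ⟨hOnn, hOle1, hOsupp, hOcover⟩
    have hfinal := fracChi_le (hConeGraph G H (fun _ => n)) hIsFC
    rw [hOweight] at hfinal
    rw [hεDef] at hfinal
    exact hfinal
end

section
/- Let r > 2 be a real number, let s, t be positive integers with s ≥ 2t and s/t ≤ r, let n ≥ 3 be odd, and set τ' = 1/((s/t)·∑_{k=0}^{n−1}(r−1)^k + 1 − s/t). Define σ'_i = ((s/t)/r)·(τ'/t)·(r−1)^i for 0 ≤ i ≤ n−1, and define δ_0 = s·σ'_0 + (σ'_0·(t·r−s)/(r−2))·((r−1)−1), δ_i = (σ'_0·(t·r−s)/(r−2))·((r−1)^{i+1}−(r−1)^{i−1}) for even i with 2 ≤ i ≤ n−3, and δ_{n−1} = (r − s/t)/r − (σ'_0·(t·r−s)/(r−2))·((r−1)^{n−2}−1) − (s−t)·σ'_0. Then: (i) s·(σ'_1+σ'_2+⋯+σ'_{n−1}) = (s/t)/r −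 t·σ'_0; (ii) δ_0+δ_2+⋯+δ_{n−3}+δ_{n−1} = t·σ'_0 + (r − s/t)/r; (iii) s·(σ'_1+⋯+σ'_{n−1}) + δ_0+δ_2+⋯+δ_{n−1} = 1; (iv) for any even i with 2 ≤ i ≤ n−1, (s−t)·(σ'_1+⋯+σ'_{i−1})·r + (δ_0+δ_2+⋯+δ_{i−2})·r = s·(σ'_1+⋯+σ'_i) + (δ_0+δ_2+⋯+δ_{i−2}); (v) for any odd i with 1 ≤ i ≤ n−2, t·(σ'_0+σ'_1+⋯+σ'_{i−1})·r − s·(σ'_1+⋯+σ'_{i−1}) = δ_0+δ_2+⋯+δ_{i−1}. -/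
open Finset

private lemma aux_i (r S T x P : ℝ) (hT : T ≠ 0) (hr0 : r ≠ 0) (h2 : r - 2 ≠ 0)
    (hpoly : x * (S * (P - 1) + (T - S) * (r - 2)) = T * (r - 2)) :
    S * (S / T / r * (x / T) * (P - (r - 1)) / (r - 2))
      = S / T / r - T * (S / T / r * (x / T)) := by
  field_simp
  linear_combination S * hpoly

private lemma aux_iv (r S T x p : ℝ) (h2 : r - 2 ≠ 0) :
    (S - T) * (x * (p * (r - 1) - (r - 1)) / (r - 2)) * r
      + (S * x + x * (T * r - S) / (r - 2) * (p - 1)) * r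
    = S * (x * (p * (r - 1) ^ 2 - (r - 1)) / (r - 2))
      + (S * x + x * (T * r - S) / (r - 2) * (p - 1)) := by
  field_simp
  ring

private lemma aux_v (r S T x p : ℝ) (h2 : r - 2 ≠ 0) :
    T * (x * (p - 1) / (r - 2)) * r - S * (x * (p - (r - 1)) / (r - 2))
    = S * x + x * (T * r - S) / (r - 2) * (p - 1) := by
  field_simp
  ring

/-- the algebraic identities used in the odd-`n` fractional colouring
construction, where `r` plays the role of `χ_f(G)` and `s/t` of `χ_f(K(s,t))`.
Sums over `δ` range over even indices only; `δ_0 + δ_2 + ⋯ + δ_{2m-2}` is written as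
`∑ k ∈ Finset.range m, δ (2*k)`, and `σ'_a + ⋯ + σ'_b` as `∑ k ∈ Finset.Icc a b, σ' k`. -/
theorem odd_colouring_identities (r : ℝ) (hr : 2 < r)
    (s t : ℕ) (hs : 0 < s) (ht : 0 < t) (hst : 2 * t ≤ s) (hrs : (s : ℝ) / t ≤ r)
    (n : ℕ) (hn : 3 ≤ n) (hodd : Odd n)
    (τ' : ℝ)
    (hτ' : τ' = 1 / (((s : ℝ) / t) * (∑ k ∈ Finset.range n, (r - 1) ^ k) + 1 - (s : ℝ) / t))
    (σ' : ℕ → ℝ) (hσ' : ∀ i, σ' i = (((s : ℝ) / t) / r) * (τ' / t) * (r - 1) ^ i)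
    (δ : ℕ → ℝ)
    (hδ0 : δ 0 = (s : ℝ) * σ' 0 + (σ' 0 * ((t : ℝ) * r - s) / (r - 2)) * ((r - 1) - 1))
    (hδmid : ∀ i, 2 ≤ i → i ≤ n - 3 → Even i →
      δ i = (σ' 0 * ((t : ℝ) * r - s) / (r - 2)) * ((r - 1) ^ (i + 1) - (r - 1) ^ (i - 1)))
    (hδlast : δ (n - 1) = (r - (s : ℝ) / t) / r
      - (σ' 0 * ((t : ℝ) * r - s) / (r - 2)) * ((r - 1) ^ (n - 2) - 1)
      - ((s : ℝ) - t) * σ' 0) :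
    -- (i)
    ((s : ℝ) * (∑ k ∈ Finset.Icc 1 (n - 1), σ' k) = ((s : ℝ) / t) / r - (t : ℝ) * σ' 0) ∧
    -- (ii)
    ((∑ k ∈ Finset.range ((n + 1) / 2), δ (2 * k)) = (t : ℝ) * σ' 0 + (r - (s : ℝ) / t) / r) ∧
    -- (iii)
    ((s : ℝ) * (∑ k ∈ Finset.Icc 1 (n - 1), σ' k)
      + (∑ k ∈ Finset.range ((n + 1) / 2), δ (2 * k)) = 1) ∧
    -- (iv)
    (∀ i, 2 ≤ i → i ≤ n - 1 → Even i →
      ((s : ℝ) - t) * (∑ k ∈ Finset.Icc 1 (i - 1), σ' k) * r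
        + (∑ k ∈ Finset.range (i / 2), δ (2 * k)) * r
      = (s : ℝ) * (∑ k ∈ Finset.Icc 1 i, σ' k) + (∑ k ∈ Finset.range (i / 2), δ (2 * k))) ∧
    -- (v)
    (∀ i, 1 ≤ i → i ≤ n - 2 → Odd i →
      (t : ℝ) * (∑ k ∈ Finset.range i, σ' k) * r
        - (s : ℝ) * (∑ k ∈ Finset.Icc 1 (i - 1), σ' k)
      = ∑ k ∈ Finset.range ((i + 1) / 2), δ (2 * k)) := by
  have ht0 : (t : ℝ) ≠ 0 := Nat.cast_ne_zero.mpr ht.ne'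
  have hr0 : r ≠ 0 := by linarith
  have h2 : r - 2 ≠ 0 := by intro h; apply hr0; linarith
  have ha1 : r - 1 ≠ 1 := by intro h; apply hr0; linarith
  have hrange : ∀ m, ∑ k ∈ Finset.range m, σ' k = σ' 0 * ((r - 1) ^ m - 1) / (r - 2) := by
    intro m
    simp only [hσ']
    rw [← Finset.mul_sum, geom_sum_eq ha1, show r - 1 - 1 = r - 2 from by ring]
    ring
  have hIcc : ∀ m, ∑ k ∈ Finset.Icc 1 m, σ' k
      = σ' 0 * ((r - 1) ^ (m + 1) - (r - 1)) / (r - 2) := by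
    intro m
    rw [← Finset.Ico_add_one_right_eq_Icc, Finset.sum_Ico_eq_sum_range]
    simp only [hσ']
    have e : ∀ i : ℕ, (↑s / ↑t / r * (τ' / ↑t)) * (r - 1) ^ (1 + i)
        = ((↑s / ↑t / r * (τ' / ↑t)) * (r - 1)) * (r - 1) ^ i := by
      intro i; rw [pow_add, pow_one]; ring
    rw [Finset.sum_congr rfl (fun i _ => e i), ← Finset.mul_sum, geom_sum_eq ha1,
      show r - 1 - 1 = r - 2 from by ring, show m + 1 - 1 = m from by omega, pow_succ]
    ring
  have hD : ∀ m, 1 ≤ m → 2 * m ≤ n - 1 →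
      ∑ k ∈ Finset.range m, δ (2 * k)
        = (s : ℝ) * σ' 0 + (σ' 0 * ((t : ℝ) * r - s) / (r - 2)) * ((r - 1) ^ (2 * m - 1) - 1) := by
    intro m
    induction m with
    | zero => intro h _; exact absurd h (by omega)
    | succ m ih =>
      intro _ hle
      rcases Nat.eq_zero_or_pos m with hm0 | hm1
      · subst hm0
        norm_num [hδ0]
      · rw [Finset.sum_range_succ, ih (by omega) (by omega),
          hδmid (2 * m) (by omega) (by omega) (even_two_mul m),
          show 2 * (m + 1) - 1 = 2 * m + 1 from by omega]
        ring
  -- closed form of τ' denominator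
  rw [geom_sum_eq ha1, show r - 1 - 1 = r - 2 from by ring] at hτ'
  have hpow : (r - 1) ≤ (r - 1) ^ n := by
    calc (r - 1) = (r - 1) ^ 1 := (pow_one _).symm
    _ ≤ (r - 1) ^ n := pow_le_pow_right₀ (by linarith) (by omega)
  have hq0 : (0 : ℝ) < (s : ℝ) / t := by positivity
  have hden : 0 < ((s : ℝ) / t) * (((r - 1) ^ n - 1) / (r - 2)) + 1 - (s : ℝ) / t := by
    have key : ((s : ℝ) / t) * (((r - 1) ^ n - 1) / (r - 2)) + 1 - (s : ℝ) / t
        = ((s : ℝ) / t) * (((r - 1) ^ n - (r - 1)) / (r - 2)) + 1 := by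
      field_simp
      ring
    rw [key]
    have h1 : 0 ≤ ((r - 1) ^ n - (r - 1)) / (r - 2) :=
      div_nonneg (by linarith) (by linarith)
    nlinarith [mul_nonneg hq0.le h1]
  -- part (i)
  have hpoly : τ' * ((s : ℝ) * ((r - 1) ^ n - 1) + ((t : ℝ) - s) * (r - 2)) = (t : ℝ) * (r - 2) := by
    rw [hτ', div_mul_eq_mul_div, div_eq_iff hden.ne']
    field_simp
    ring
  have hσ'0v : σ' 0 = (s : ℝ) / t / r * (τ' / t) := by
    rw [hσ' 0, pow_zero, mul_one]
  have hi : (s : ℝ) * (∑ k ∈ Finset.Icc 1 (n - 1), σ' k) = ((s : ℝ) / t) / r - (t : ℝ) * σ' 0 := by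
    rw [hIcc (n - 1), show n - 1 + 1 = n from by omega, hσ'0v]
    exact aux_i r (s : ℝ) (t : ℝ) τ' ((r - 1) ^ n) ht0 hr0 h2 hpoly
  -- part (ii)
  have hii : (∑ k ∈ Finset.range ((n + 1) / 2), δ (2 * k))
      = (t : ℝ) * σ' 0 + (r - (s : ℝ) / t) / r := by
    obtain ⟨m, hm⟩ := hodd
    rw [show (n + 1) / 2 = m + 1 from by omega, Finset.sum_range_succ,
      hD m (by omega) (by omega), show 2 * m - 1 = n - 2 from by omega,
      show 2 * m = n - 1 from by omega, hδlast]
    ring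
  refine ⟨hi, hii, ?_, ?_, ?_⟩
  · -- (iii)
    rw [hi, hii]
    field_simp
    ring
  · -- (iv)
    intro i h2i hin heven
    obtain ⟨m, hm⟩ := heven
    rw [show i / 2 = m from by omega, hD m (by omega) (by omega),
      show 2 * m - 1 = i - 1 from by omega, hIcc (i - 1), hIcc i,
      show i - 1 + 1 = i from by omega]
    have e1 : (r - 1) ^ i = (r - 1) ^ (i - 1) * (r - 1) := by
      rw [← pow_succ]; congr 1; omega
    have e2 : (r - 1) ^ (i + 1) = (r - 1) ^ (i - 1) * (r - 1) ^ 2 := by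
      rw [← pow_add]; congr 1; omega
    rw [e1, e2]
    exact aux_iv r (s : ℝ) (t : ℝ) (σ' 0) ((r - 1) ^ (i - 1)) h2
  · -- (v)
    intro i h1i h2i hoddi
    obtain ⟨m, hm⟩ := hoddi
    rw [show (i + 1) / 2 = m + 1 from by omega, hD (m + 1) (by omega) (by omega),
      show 2 * (m + 1) - 1 = i from by omega, hrange i, hIcc (i - 1),
      show i - 1 + 1 = i from by omega]
    exact aux_v r (s : ℝ) (t : ℝ) (σ' 0) ((r - 1) ^ i) h2
end

section
/- Let G = C_7^2 be the circulant graph on vertex set ℤ/7ℤ in which u and v are adjacent if and only if u − v ≡ ±1 or ±2 (mod 7), and let K_2 be the complete graph on two vertices. Then the (K_2,3)-cone over G has no proper 4-colouring; that is, χ(Δ_{K_2,3}(G)) ≥ 5. -/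
open Finset

/-- The circulant graph `C₇²` on `ℤ/7ℤ`: `u ~ v` iff `u - v ≡ ±1, ±2 (mod 7)`. -/
def C7sq : SimpleGraph (ZMod 7) where
  Adj u v := u - v = 1 ∨ u - v = 2 ∨ v - u = 1 ∨ v - u = 2
  symm := ⟨by intro u v hadj; tauto⟩
  loopless := ⟨by
    intro u hadj
    simp only [sub_self] at hadj
    rcases hadj with hadj | hadj | hadj | hadj <;> exact absurd hadj (by decide)⟩

set_option maxRecDepth 1000000
set_option maxHeartbeats 2000000000

private def cs : List ℕ := [0,1,2,3]

private def chk : Bool :=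
  cs.all (fun b0 => cs.all (fun b1 => ((b0 == b1) || cs.all (fun b2 => ((b1 == b2) || ((b0 == b2) || cs.all (fun b3 => ((b2 == b3) || ((b1 == b3) || cs.all (fun b4 => ((b3 == b4) || ((b2 == b4) || cs.all (fun b5 => ((b4 == b5) || ((b3 == b5) || ((b0 == b5) || cs.all (fun b6 => ((b5 == b6) || ((b4 == b6) || ((b1 == b6) || ((b0 == b6) || cs.all (fun a0 => cs.all (fun d0 => ((b1 == d0) || ((b2 == d0) || ((b6 == d0) || ((b5 == d0) || cs.all (fun d1 => ((b2 == d1) || ((b3 == d1) || ((b0 == d1) || ((b6 == d1) || cs.all (fun d2 => ((b3 == d2) || ((b4 == d2) || ((b1 == d2) || ((b0 == d2) || cs.all (fun d3 => ((b4 == d3) || ((b5 == d3) || ((b2 == d3) || ((b1 == d3) || cs.all (fun d4 => ((b5 == d4) || ((b6 == d4) || ((b3 == d4) || ((b2 == d4) || cs.all (fun d5 => ((b6 == d5) || ((b0 == d5) || ((b4 == d5) || ((b3 == d5) || cs.all (fun d6 => ((b0 == d6) || ((b1 == d6) || ((b5 == d6) || ((b4 == d6) || cs.all (fun f0 => ((d1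 == f0) || ((d2 == f0) || ((d6 == f0) || ((d5 == f0) || ((f0 == a0) || cs.all (fun f1 => ((d2 == f1) || ((d3 == f1) || ((d0 == f1) || ((d6 == f1) || ((f1 == a0) || cs.all (fun f2 => ((d3 == f2) || ((d4 == f2) || ((d1 == f2) || ((d0 == f2) || ((f2 == a0) || cs.all (fun f3 => ((d4 == f3) || ((d5 == f3) || ((d2 == f3) || ((d1 == f3) || ((f3 == a0) || cs.all (fun f4 => ((d5 == f4) || ((d6 == f4) || ((d3 == f4) || ((d2 == f4) || ((f4 == a0) || cs.all (fun f5 => ((d6 == f5) || ((d0 == f5) || ((d4 == f5) || ((d3 == f5) || ((f5 == a0) || cs.all (fun f6 => ((d0 == f6) || ((d1 == f6) || ((d5 == f6) || ((d4 == f6) || ((f6 == a0) || cs.all (fun a1 => ((a0 == a1) || cs.all (fun e0 => ((b1 == e0) || ((b2 == e0) || ((b6 == e0) || ((b5 == e0) || cs.all (fun e1 => ((b2 == e1) || ((b3 == e1) || ((b0 == e1) || ((b6 == e1) || cs.all (fun e2 => ((b3 == e2) || ((b4 == e2) || ((b1 == e2) || ((b0 == e2) || cs.all (fun e3 => ((b4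 == e3) || ((b5 == e3) || ((b2 == e3) || ((b1 == e3) || cs.all (fun e4 => ((b5 == e4) || ((b6 == e4) || ((b3 == e4) || ((b2 == e4) || cs.all (fun e5 => ((b6 == e5) || ((b0 == e5) || ((b4 == e5) || ((b3 == e5) || cs.all (fun e6 => ((b0 == e6) || ((b1 == e6) || ((b5 == e6) || ((b4 == e6) || cs.all (fun g0 => ((e1 == g0) || ((e2 == g0) || ((e6 == g0) || ((e5 == g0) || ((g0 == a1) || cs.all (fun g1 => ((e2 == g1) || ((e3 == g1) || ((e0 == g1) || ((e6 == g1) || ((g1 == a1) || cs.all (fun g2 => ((e3 == g2) || ((e4 == g2) || ((e1 == g2) || ((e0 == g2) || ((g2 == a1) || cs.all (fun g3 => ((e4 == g3) || ((e5 == g3) || ((e2 == g3) || ((e1 == g3) || ((g3 == a1) || cs.all (fun g4 => ((e5 == g4) || ((e6 == g4) || ((e3 == g4) || ((e2 == g4) || ((g4 == a1) || cs.all (fun g5 => ((e6 == g5) || ((e0 == g5) || ((e4 == g5) || ((e3 == g5) || ((g5 == a1) || cs.all (fun g6 => ((e0 == g6) || ((e1 == g6) || ((e5 == g6) || ((e4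 == g6) || ((g6 == a1) || false))))))))))))))))))))))))))))))))))))))))))))))))))))))))))))))))))))))))))))))))))))))))))))))))))))))))))))))))))))))))))))))))))))))))))))))))))))))))))))))))))))))))))))))))))

private theorem bstep {x y : Fin 4} {r : Bool} (hne : x ≠ y)
    (h : ((x.val == y.val) || r) = true) : r = true := by
  have hf : (x.val == y.val) = false :=
    beq_eq_false_iff_ne.mpr (fun hv => hne (Fin.val_injective hv))
  rwa [hf, Bool.false_or] at h

private theorem ball {p : ℕ → Bool} (h : cs.all p = true) (x : Fin 4) : p x.val = true :=
  List.all_eq_true.mp h x.val (by fin_cases x <;> decide)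

set_option maxRecDepth 100000 in
private theorem chk_eq : chk = true := by decide

private theorem hcone_key : ∀ (b0 : Fin 4), ∀ (b1 : Fin 4), b0 ≠ b1 → ∀ (b2 : Fin 4), b1 ≠ b2 → b0 ≠ b2 → ∀ (b3 : Fin 4), b2 ≠ b3 → b1 ≠ b3 → ∀ (b4 : Fin 4), b3 ≠ b4 → b2 ≠ b4 → ∀ (b5 : Fin 4), b4 ≠ b5 → b3 ≠ b5 → b0 ≠ b5 → ∀ (b6 : Fin 4), b5 ≠ b6 → b4 ≠ b6 → b1 ≠ b6 → b0 ≠ b6 → ∀ (a0 : Fin 4), ∀ (d0 : Fin 4), b1 ≠ d0 → b2 ≠ d0 → b6 ≠ d0 → b5 ≠ d0 → ∀ (d1 : Fin 4), b2 ≠ d1 → b3 ≠ d1 → b0 ≠ d1 → b6 ≠ d1 → ∀ (d2 : Fin 4), b3 ≠ d2 → b4 ≠ d2 → b1 ≠ d2 → b0 ≠ d2 → ∀ (d3 : Fin 4), b4 ≠ d3 → b5 ≠ d3 → b2 ≠ d3 → b1 ≠ d3 → ∀ (d4 : Fin 4), b5 ≠ d4 → b6 ≠ d4 → b3 ≠ d4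 → b2 ≠ d4 → ∀ (d5 : Fin 4), b6 ≠ d5 → b0 ≠ d5 → b4 ≠ d5 → b3 ≠ d5 → ∀ (d6 : Fin 4), b0 ≠ d6 → b1 ≠ d6 → b5 ≠ d6 → b4 ≠ d6 → ∀ (f0 : Fin 4), d1 ≠ f0 → d2 ≠ f0 → d6 ≠ f0 → d5 ≠ f0 → f0 ≠ a0 → ∀ (f1 : Fin 4), d2 ≠ f1 → d3 ≠ f1 → d0 ≠ f1 → d6 ≠ f1 → f1 ≠ a0 → ∀ (f2 : Fin 4), d3 ≠ f2 → d4 ≠ f2 → d1 ≠ f2 → d0 ≠ f2 → f2 ≠ a0 → ∀ (f3 : Fin 4), d4 ≠ f3 → d5 ≠ f3 → d2 ≠ f3 → d1 ≠ f3 → f3 ≠ a0 → ∀ (f4 : Fin 4), d5 ≠ f4 → d6 ≠ f4 → d3 ≠ f4 → d2 ≠ f4 → f4 ≠ a0 → ∀ (f5 : Fin 4), d6 ≠ f5 → d0 ≠ f5 → d4 ≠ f5 → d3 ≠ f5 → f5 ≠ a0 → ∀ (f6 : Fin 4), d0 ≠ f6 → d1 ≠ f6 → d5 ≠ f6 → d4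 ≠ f6 → f6 ≠ a0 → ∀ (a1 : Fin 4), a0 ≠ a1 → ∀ (e0 : Fin 4), b1 ≠ e0 → b2 ≠ e0 → b6 ≠ e0 → b5 ≠ e0 → ∀ (e1 : Fin 4), b2 ≠ e1 → b3 ≠ e1 → b0 ≠ e1 → b6 ≠ e1 → ∀ (e2 : Fin 4), b3 ≠ e2 → b4 ≠ e2 → b1 ≠ e2 → b0 ≠ e2 → ∀ (e3 : Fin 4), b4 ≠ e3 → b5 ≠ e3 → b2 ≠ e3 → b1 ≠ e3 → ∀ (e4 : Fin 4), b5 ≠ e4 → b6 ≠ e4 → b3 ≠ e4 → b2 ≠ e4 → ∀ (e5 : Fin 4), b6 ≠ e5 → b0 ≠ e5 → b4 ≠ e5 → b3 ≠ e5 → ∀ (e6 : Fin 4), b0 ≠ e6 → b1 ≠ e6 → b5 ≠ e6 → b4 ≠ e6 → ∀ (g0 : Fin 4), e1 ≠ g0 → e2 ≠ g0 → e6 ≠ g0 → e5 ≠ g0 → g0 ≠ a1 → ∀ (g1 : Fin 4), e2 ≠ g1 → e3 ≠ g1 → e0 ≠ g1 → e6 ≠ g1 → g1 ≠ a1 → ∀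 (g2 : Fin 4), e3 ≠ g2 → e4 ≠ g2 → e1 ≠ g2 → e0 ≠ g2 → g2 ≠ a1 → ∀ (g3 : Fin 4), e4 ≠ g3 → e5 ≠ g3 → e2 ≠ g3 → e1 ≠ g3 → g3 ≠ a1 → ∀ (g4 : Fin 4), e5 ≠ g4 → e6 ≠ g4 → e3 ≠ g4 → e2 ≠ g4 → g4 ≠ a1 → ∀ (g5 : Fin 4), e6 ≠ g5 → e0 ≠ g5 → e4 ≠ g5 → e3 ≠ g5 → g5 ≠ a1 → ∀ (g6 : Fin 4), e0 ≠ g6 → e1 ≠ g6 → e5 ≠ g6 → e4 ≠ g6 → g6 ≠ a1 → False := by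
  intro b0
  have h := ball chk_eq b0
  intro b1
  replace h := ball h b1
  intro hne_b0_b1
  replace h := bstep hne_b0_b1 h
  intro b2
  replace h := ball h b2
  intro hne_b1_b2
  replace h := bstep hne_b1_b2 h
  intro hne_b0_b2
  replace h := bstep hne_b0_b2 h
  intro b3
  replace h := ball h b3
  intro hne_b2_b3
  replace h := bstep hne_b2_b3 h
  intro hne_b1_b3
  replace h := bstep hne_b1_b3 h
  intro b4
  replace h := ball h b4
  intro hne_b3_b4
  replace h := bstep hne_b3_b4 h
  intro hne_b2_b4
  replace h := bstep hne_b2_b4 h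
  intro b5
  replace h := ball h b5
  intro hne_b4_b5
  replace h := bstep hne_b4_b5 h
  intro hne_b3_b5
  replace h := bstep hne_b3_b5 h
  intro hne_b0_b5
  replace h := bstep hne_b0_b5 h
  intro b6
  replace h := ball h b6
  intro hne_b5_b6
  replace h := bstep hne_b5_b6 h
  intro hne_b4_b6
  replace h := bstep hne_b4_b6 h
  intro hne_b1_b6
  replace h := bstep hne_b1_b6 h
  intro hne_b0_b6
  replace h := bstep hne_b0_b6 h
  intro a0
  replace h := ball h a0
  intro d0
  replace h := ball h d0
  intro hne_b1_d0
  replace h := bstep hne_b1_d0 h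
  intro hne_b2_d0
  replace h := bstep hne_b2_d0 h
  intro hne_b6_d0
  replace h := bstep hne_b6_d0 h
  intro hne_b5_d0
  replace h := bstep hne_b5_d0 h
  intro d1
  replace h := ball h d1
  intro hne_b2_d1
  replace h := bstep hne_b2_d1 h
  intro hne_b3_d1
  replace h := bstep hne_b3_d1 h
  intro hne_b0_d1
  replace h := bstep hne_b0_d1 h
  intro hne_b6_d1
  replace h := bstep hne_b6_d1 h
  intro d2
  replace h := ball h d2
  intro hne_b3_d2
  replace h := bstep hne_b3_d2 h
  intro hne_b4_d2
  replace h := bstep hne_b4_d2 h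
  intro hne_b1_d2
  replace h := bstep hne_b1_d2 h
  intro hne_b0_d2
  replace h := bstep hne_b0_d2 h
  intro d3
  replace h := ball h d3
  intro hne_b4_d3
  replace h := bstep hne_b4_d3 h
  intro hne_b5_d3
  replace h := bstep hne_b5_d3 h
  intro hne_b2_d3
  replace h := bstep hne_b2_d3 h
  intro hne_b1_d3
  replace h := bstep hne_b1_d3 h
  intro d4
  replace h := ball h d4
  intro hne_b5_d4
  replace h := bstep hne_b5_d4 h
  intro hne_b6_d4
  replace h := bstep hne_b6_d4 h
  intro hne_b3_d4
  replace h := bstep hne_b3_d4 h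
  intro hne_b2_d4
  replace h := bstep hne_b2_d4 h
  intro d5
  replace h := ball h d5
  intro hne_b6_d5
  replace h := bstep hne_b6_d5 h
  intro hne_b0_d5
  replace h := bstep hne_b0_d5 h
  intro hne_b4_d5
  replace h := bstep hne_b4_d5 h
  intro hne_b3_d5
  replace h := bstep hne_b3_d5 h
  intro d6
  replace h := ball h d6
  intro hne_b0_d6
  replace h := bstep hne_b0_d6 h
  intro hne_b1_d6
  replace h := bstep hne_b1_d6 h
  intro hne_b5_d6
  replace h := bstep hne_b5_d6 h
  intro hne_b4_d6
  replace h := bstep hne_b4_d6 h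
  intro f0
  replace h := ball h f0
  intro hne_d1_f0
  replace h := bstep hne_d1_f0 h
  intro hne_d2_f0
  replace h := bstep hne_d2_f0 h
  intro hne_d6_f0
  replace h := bstep hne_d6_f0 h
  intro hne_d5_f0
  replace h := bstep hne_d5_f0 h
  intro hne_f0_a0
  replace h := bstep hne_f0_a0 h
  intro f1
  replace h := ball h f1
  intro hne_d2_f1
  replace h := bstep hne_d2_f1 h
  intro hne_d3_f1
  replace h := bstep hne_d3_f1 h
  intro hne_d0_f1
  replace h := bstep hne_d0_f1 h
  intro hne_d6_f1
  replace h := bstep hne_d6_f1 h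
  intro hne_f1_a0
  replace h := bstep hne_f1_a0 h
  intro f2
  replace h := ball h f2
  intro hne_d3_f2
  replace h := bstep hne_d3_f2 h
  intro hne_d4_f2
  replace h := bstep hne_d4_f2 h
  intro hne_d1_f2
  replace h := bstep hne_d1_f2 h
  intro hne_d0_f2
  replace h := bstep hne_d0_f2 h
  intro hne_f2_a0
  replace h := bstep hne_f2_a0 h
  intro f3
  replace h := ball h f3
  intro hne_d4_f3
  replace h := bstep hne_d4_f3 h
  intro hne_d5_f3
  replace h := bstep hne_d5_f3 h
  intro hne_d2_f3
  replace h := bstep hne_d2_f3 h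
  intro hne_d1_f3
  replace h := bstep hne_d1_f3 h
  intro hne_f3_a0
  replace h := bstep hne_f3_a0 h
  intro f4
  replace h := ball h f4
  intro hne_d5_f4
  replace h := bstep hne_d5_f4 h
  intro hne_d6_f4
  replace h := bstep hne_d6_f4 h
  intro hne_d3_f4
  replace h := bstep hne_d3_f4 h
  intro hne_d2_f4
  replace h := bstep hne_d2_f4 h
  intro hne_f4_a0
  replace h := bstep hne_f4_a0 h
  intro f5
  replace h := ball h f5
  intro hne_d6_f5
  replace h := bstep hne_d6_f5 h
  intro hne_d0_f5
  replace h := bstep hne_d0_f5 h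
  intro hne_d4_f5
  replace h := bstep hne_d4_f5 h
  intro hne_d3_f5
  replace h := bstep hne_d3_f5 h
  intro hne_f5_a0
  replace h := bstep hne_f5_a0 h
  intro f6
  replace h := ball h f6
  intro hne_d0_f6
  replace h := bstep hne_d0_f6 h
  intro hne_d1_f6
  replace h := bstep hne_d1_f6 h
  intro hne_d5_f6
  replace h := bstep hne_d5_f6 h
  intro hne_d4_f6
  replace h := bstep hne_d4_f6 h
  intro hne_f6_a0
  replace h := bstep hne_f6_a0 h
  intro a1
  replace h := ball h a1
  intro hne_a0_a1
  replace h := bstep hne_a0_a1 h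
  intro e0
  replace h := ball h e0
  intro hne_b1_e0
  replace h := bstep hne_b1_e0 h
  intro hne_b2_e0
  replace h := bstep hne_b2_e0 h
  intro hne_b6_e0
  replace h := bstep hne_b6_e0 h
  intro hne_b5_e0
  replace h := bstep hne_b5_e0 h
  intro e1
  replace h := ball h e1
  intro hne_b2_e1
  replace h := bstep hne_b2_e1 h
  intro hne_b3_e1
  replace h := bstep hne_b3_e1 h
  intro hne_b0_e1
  replace h := bstep hne_b0_e1 h
  intro hne_b6_e1
  replace h := bstep hne_b6_e1 h
  intro e2
  replace h := ball h e2
  intro hne_b3_e2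
  replace h := bstep hne_b3_e2 h
  intro hne_b4_e2
  replace h := bstep hne_b4_e2 h
  intro hne_b1_e2
  replace h := bstep hne_b1_e2 h
  intro hne_b0_e2
  replace h := bstep hne_b0_e2 h
  intro e3
  replace h := ball h e3
  intro hne_b4_e3
  replace h := bstep hne_b4_e3 h
  intro hne_b5_e3
  replace h := bstep hne_b5_e3 h
  intro hne_b2_e3
  replace h := bstep hne_b2_e3 h
  intro hne_b1_e3
  replace h := bstep hne_b1_e3 h
  intro e4
  replace h := ball h e4
  intro hne_b5_e4
  replace h := bstep hne_b5_e4 h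
  intro hne_b6_e4
  replace h := bstep hne_b6_e4 h
  intro hne_b3_e4
  replace h := bstep hne_b3_e4 h
  intro hne_b2_e4
  replace h := bstep hne_b2_e4 h
  intro e5
  replace h := ball h e5
  intro hne_b6_e5
  replace h := bstep hne_b6_e5 h
  intro hne_b0_e5
  replace h := bstep hne_b0_e5 h
  intro hne_b4_e5
  replace h := bstep hne_b4_e5 h
  intro hne_b3_e5
  replace h := bstep hne_b3_e5 h
  intro e6
  replace h := ball h e6
  intro hne_b0_e6
  replace h := bstep hne_b0_e6 h
  intro hne_b1_e6
  replace h := bstep hne_b1_e6 h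
  intro hne_b5_e6
  replace h := bstep hne_b5_e6 h
  intro hne_b4_e6
  replace h := bstep hne_b4_e6 h
  intro g0
  replace h := ball h g0
  intro hne_e1_g0
  replace h := bstep hne_e1_g0 h
  intro hne_e2_g0
  replace h := bstep hne_e2_g0 h
  intro hne_e6_g0
  replace h := bstep hne_e6_g0 h
  intro hne_e5_g0
  replace h := bstep hne_e5_g0 h
  intro hne_g0_a1
  replace h := bstep hne_g0_a1 h
  intro g1
  replace h := ball h g1
  intro hne_e2_g1
  replace h := bstep hne_e2_g1 h
  intro hne_e3_g1
  replace h := bstep hne_e3_g1 h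
  intro hne_e0_g1
  replace h := bstep hne_e0_g1 h
  intro hne_e6_g1
  replace h := bstep hne_e6_g1 h
  intro hne_g1_a1
  replace h := bstep hne_g1_a1 h
  intro g2
  replace h := ball h g2
  intro hne_e3_g2
  replace h := bstep hne_e3_g2 h
  intro hne_e4_g2
  replace h := bstep hne_e4_g2 h
  intro hne_e1_g2
  replace h := bstep hne_e1_g2 h
  intro hne_e0_g2
  replace h := bstep hne_e0_g2 h
  intro hne_g2_a1
  replace h := bstep hne_g2_a1 h
  intro g3
  replace h := ball h g3
  intro hne_e4_g3
  replace h := bstep hne_e4_g3 h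
  intro hne_e5_g3
  replace h := bstep hne_e5_g3 h
  intro hne_e2_g3
  replace h := bstep hne_e2_g3 h
  intro hne_e1_g3
  replace h := bstep hne_e1_g3 h
  intro hne_g3_a1
  replace h := bstep hne_g3_a1 h
  intro g4
  replace h := ball h g4
  intro hne_e5_g4
  replace h := bstep hne_e5_g4 h
  intro hne_e6_g4
  replace h := bstep hne_e6_g4 h
  intro hne_e3_g4
  replace h := bstep hne_e3_g4 h
  intro hne_e2_g4
  replace h := bstep hne_e2_g4 h
  intro hne_g4_a1
  replace h := bstep hne_g4_a1 h
  intro g5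
  replace h := ball h g5
  intro hne_e6_g5
  replace h := bstep hne_e6_g5 h
  intro hne_e0_g5
  replace h := bstep hne_e0_g5 h
  intro hne_e4_g5
  replace h := bstep hne_e4_g5 h
  intro hne_e3_g5
  replace h := bstep hne_e3_g5 h
  intro hne_g5_a1
  replace h := bstep hne_g5_a1 h
  intro g6
  replace h := ball h g6
  intro hne_e0_g6
  replace h := bstep hne_e0_g6 h
  intro hne_e1_g6
  replace h := bstep hne_e1_g6 h
  intro hne_e5_g6
  replace h := bstep hne_e5_g6 h
  intro hne_e4_g6
  replace h := bstep hne_e4_g6 h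
  intro hne_g6_a1
  replace h := bstep hne_g6_a1 h
  exact Bool.noConfusion h


/-- the `(K₂,3)`-cone over `C₇²` has no proper `4`-colouring; that is,
its chromatic number is at least `5`. -/
theorem hCone_C7sq_not_4_colorable :
    ¬ (hConeGraph C7sq (SimpleGraph.completeGraph (Fin 2)) (fun _ => 3)).Colorable 4 ∧
    5 ≤ (hConeGraph C7sq (SimpleGraph.completeGraph (Fin 2)) (fun _ => 3)).chromaticNumber := by
  have h4 : ¬ (hConeGraph C7sq (SimpleGraph.completeGraph (Fin 2)) (fun _ => 3)).Colorable 4 := by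
    rintro ⟨c⟩
    set l0 : Fin ((fun _ : Fin 2 => 3) 0 - 1) := ⟨0, by norm_num⟩ with hl0
    set l1 : Fin ((fun _ : Fin 2 => 3) 0 - 1) := ⟨1, by norm_num⟩ with hl1
    have hB : ∀ x y : ZMod 7, (x - y = 1 ∨ x - y = 2 ∨ y - x = 1 ∨ y - x = 2) →
        c (Sum.inl x) ≠ c (Sum.inl y) := fun x y h => c.valid h
    have hBL : ∀ (w : Fin 2) (x y : ZMod 7), (x - y = 1 ∨ x - y = 2 ∨ y - x = 1 ∨ y - x = 2) →
        c (Sum.inl x) ≠ c (Sum.inr (Sum.inl ⟨w, y, l0⟩)) := fun w x y h => c.valid ⟨h, rfl⟩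
    have hLL : ∀ (w : Fin 2) (x y : ZMod 7), (x - y = 1 ∨ x - y = 2 ∨ y - x = 1 ∨ y - x = 2) →
        c (Sum.inr (Sum.inl ⟨w, x, l0⟩)) ≠ c (Sum.inr (Sum.inl ⟨w, y, l1⟩)) :=
      fun w x y h => c.valid ⟨rfl, h, Or.inl rfl⟩
    have hLA : ∀ (w : Fin 2) (x : ZMod 7),
        c (Sum.inr (Sum.inl ⟨w, x, l1⟩)) ≠ c (Sum.inr (Sum.inr w)) :=
      fun w x => c.valid ⟨rfl, rfl⟩
    have hAA : c (Sum.inr (Sum.inr 0)) ≠ c (Sum.inr (Sum.inr 1)) :=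
      c.valid (show (0 : Fin 2) ≠ 1 by decide)
    exact hcone_key (c (Sum.inl 0)) (c (Sum.inl 1)) (hB 0 1 (by decide)) (c (Sum.inl 2)) (hB 1 2 (by decide)) (hB 0 2 (by decide)) (c (Sum.inl 3)) (hB 2 3 (by decide)) (hB 1 3 (by decide)) (c (Sum.inl 4)) (hB 3 4 (by decide)) (hB 2 4 (by decide)) (c (Sum.inl 5)) (hB 4 5 (by decide)) (hB 3 5 (by decide)) (hB 0 5 (by decide)) (c (Sum.inl 6)) (hB 5 6 (by decide)) (hB 4 6 (by decide)) (hB 1 6 (by decide)) (hB 0 6 (by decide)) (c (Sum.inr (Sum.inr 0))) (c (Sum.inr (Sum.inl ⟨0, 0, l0⟩))) (hBL 0 1 0 (by decide)) (hBL 0 2 0 (by decide)) (hBL 0 6 0 (by decide)) (hBL 0 5 0 (by decide)) (c (Sum.inr (Sum.inl ⟨0, 1, l0⟩))) (hBL 0 2 1 (by decide)) (hBL 0 3 1 (by decide)) (hBL 0 0 1 (by decide)) (hBL 0 6 1 (by decide)) (c (Sum.inr (Sum.inl ⟨0, 2, l0⟩))) (hBL 0 3 2 (by decide)) (hBL 0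 4 2 (by decide)) (hBL 0 1 2 (by decide)) (hBL 0 0 2 (by decide)) (c (Sum.inr (Sum.inl ⟨0, 3, l0⟩))) (hBL 0 4 3 (by decide)) (hBL 0 5 3 (by decide)) (hBL 0 2 3 (by decide)) (hBL 0 1 3 (by decide)) (c (Sum.inr (Sum.inl ⟨0, 4, l0⟩))) (hBL 0 5 4 (by decide)) (hBL 0 6 4 (by decide)) (hBL 0 3 4 (by decide)) (hBL 0 2 4 (by decide)) (c (Sum.inr (Sum.inl ⟨0, 5, l0⟩))) (hBL 0 6 5 (by decide)) (hBL 0 0 5 (by decide)) (hBL 0 4 5 (by decide)) (hBL 0 3 5 (by decide)) (c (Sum.inr (Sum.inl ⟨0, 6, l0⟩))) (hBL 0 0 6 (by decide)) (hBL 0 1 6 (by decide)) (hBL 0 5 6 (by decide)) (hBL 0 4 6 (by decide)) (c (Sum.inr (Sum.inl ⟨0, 0, l1⟩))) (hLL 0 1 0 (by decide)) (hLL 0 2 0 (by decide)) (hLL 0 6 0 (by decide)) (hLL 0 5 0 (by decide)) (hLA 0 0) (c (Sum.inr (Sum.inl ⟨0, 1, l1⟩))) (hLL 0 2 1 (by decide))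 (hLL 0 3 1 (by decide)) (hLL 0 0 1 (by decide)) (hLL 0 6 1 (by decide)) (hLA 0 1) (c (Sum.inr (Sum.inl ⟨0, 2, l1⟩))) (hLL 0 3 2 (by decide)) (hLL 0 4 2 (by decide)) (hLL 0 1 2 (by decide)) (hLL 0 0 2 (by decide)) (hLA 0 2) (c (Sum.inr (Sum.inl ⟨0, 3, l1⟩))) (hLL 0 4 3 (by decide)) (hLL 0 5 3 (by decide)) (hLL 0 2 3 (by decide)) (hLL 0 1 3 (by decide)) (hLA 0 3) (c (Sum.inr (Sum.inl ⟨0, 4, l1⟩))) (hLL 0 5 4 (by decide)) (hLL 0 6 4 (by decide)) (hLL 0 3 4 (by decide)) (hLL 0 2 4 (by decide)) (hLA 0 4) (c (Sum.inr (Sum.inl ⟨0, 5, l1⟩))) (hLL 0 6 5 (by decide)) (hLL 0 0 5 (by decide)) (hLL 0 4 5 (by decide)) (hLL 0 3 5 (by decide)) (hLA 0 5) (c (Sum.inr (Sum.inl ⟨0, 6, l1⟩))) (hLL 0 0 6 (by decide)) (hLL 0 1 6 (by decide)) (hLL 0 5 6 (by decide)) (hLL 0 4 6 (by decide)) (hLA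 0 6) (c (Sum.inr (Sum.inr 1))) hAA (c (Sum.inr (Sum.inl ⟨1, 0, l0⟩))) (hBL 1 1 0 (by decide)) (hBL 1 2 0 (by decide)) (hBL 1 6 0 (by decide)) (hBL 1 5 0 (by decide)) (c (Sum.inr (Sum.inl ⟨1, 1, l0⟩))) (hBL 1 2 1 (by decide)) (hBL 1 3 1 (by decide)) (hBL 1 0 1 (by decide)) (hBL 1 6 1 (by decide)) (c (Sum.inr (Sum.inl ⟨1, 2, l0⟩))) (hBL 1 3 2 (by decide)) (hBL 1 4 2 (by decide)) (hBL 1 1 2 (by decide)) (hBL 1 0 2 (by decide)) (c (Sum.inr (Sum.inl ⟨1, 3, l0⟩))) (hBL 1 4 3 (by decide)) (hBL 1 5 3 (by decide)) (hBL 1 2 3 (by decide)) (hBL 1 1 3 (by decide)) (c (Sum.inr (Sum.inl ⟨1, 4, l0⟩))) (hBL 1 5 4 (by decide)) (hBL 1 6 4 (by decide)) (hBL 1 3 4 (by decide)) (hBL 1 2 4 (by decide)) (c (Sum.inr (Sum.inl ⟨1, 5, l0⟩))) (hBL 1 6 5 (by decide)) (hBL 1 0 5 (by decide)) (hBL 1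 4 5 (by decide)) (hBL 1 3 5 (by decide)) (c (Sum.inr (Sum.inl ⟨1, 6, l0⟩))) (hBL 1 0 6 (by decide)) (hBL 1 1 6 (by decide)) (hBL 1 5 6 (by decide)) (hBL 1 4 6 (by decide)) (c (Sum.inr (Sum.inl ⟨1, 0, l1⟩))) (hLL 1 1 0 (by decide)) (hLL 1 2 0 (by decide)) (hLL 1 6 0 (by decide)) (hLL 1 5 0 (by decide)) (hLA 1 0) (c (Sum.inr (Sum.inl ⟨1, 1, l1⟩))) (hLL 1 2 1 (by decide)) (hLL 1 3 1 (by decide)) (hLL 1 0 1 (by decide)) (hLL 1 6 1 (by decide)) (hLA 1 1) (c (Sum.inr (Sum.inl ⟨1, 2, l1⟩))) (hLL 1 3 2 (by decide)) (hLL 1 4 2 (by decide)) (hLL 1 1 2 (by decide)) (hLL 1 0 2 (by decide)) (hLA 1 2) (c (Sum.inr (Sum.inl ⟨1, 3, l1⟩))) (hLL 1 4 3 (by decide)) (hLL 1 5 3 (by decide)) (hLL 1 2 3 (by decide)) (hLL 1 1 3 (by decide)) (hLA 1 3) (c (Sum.inr (Sum.inl ⟨1, 4, l1⟩))) (hLL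 1 5 4 (by decide)) (hLL 1 6 4 (by decide)) (hLL 1 3 4 (by decide)) (hLL 1 2 4 (by decide)) (hLA 1 4) (c (Sum.inr (Sum.inl ⟨1, 5, l1⟩))) (hLL 1 6 5 (by decide)) (hLL 1 0 5 (by decide)) (hLL 1 4 5 (by decide)) (hLL 1 3 5 (by decide)) (hLA 1 5) (c (Sum.inr (Sum.inl ⟨1, 6, l1⟩))) (hLL 1 0 6 (by decide)) (hLL 1 1 6 (by decide)) (hLL 1 5 6 (by decide)) (hLL 1 4 6 (by decide)) (hLA 1 6)
  refine ⟨h4, ?_⟩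
  by_contra hlt
  push_neg at hlt
  have : (hConeGraph C7sq (SimpleGraph.completeGraph (Fin 2)) (fun _ => 3)).chromaticNumber ≤ 4 :=
    Order.le_of_lt_add_one (by exact_mod_cast hlt)
  exact h4 (SimpleGraph.chromaticNumber_le_iff_colorable.mp this)
end
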